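/- arXiv:0903.4453 — 6 statements merged into one kernel-verified Lean document; each statement's English description precedes it below -/
import Mathlib

section
/- Let r > 1/2 and let a : ℕ → ℝ be a sequence such that M := ∑_{i=0}^∞ a_i²(1+i²)^r < ∞. Then there exists a constant C > 0 depending only on r such that for every integer p ≥ 1 and every x ∈ [-1,1], the series ∑_{i=p+1}^∞ a_i T_i(x) converges absolutely and |∑_{i=p+1}^∞ a_i T_i(x)| ≤ C · p^{-(r-1/2)} · M^{1/2}. -/
/-! Since `|T_i| ≤ 1` on `[-1, 1]`, Cauchy–Schwarz with the weights `(1 + i²)^(±r)` bounds the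
tail by `√M · (∑_{i > p} (1 + i²)^(-r))^(1/2)`, and by comparison with an integral the weight
tail is at most `∫_p^∞ u^(-2r) du = p^(1-2r) / (2r - 1)`; so `C = (2r - 1)^(-1/2)` works. -/

open Polynomial Finset

theorem sum_range_rpow_neg_succ_le {p s : ℝ} (hp : 0 < p) (hs : 0 < s) (n : ℕ) :
    ∑ i ∈ range n, (p + ↑(i + 1)) ^ (-(s + 1)) ≤ p ^ (-s) / s := by
  have hanti : AntitoneOn (fun u : ℝ => u ^ (-(s + 1))) (Set.Icc p (p + n)) :=
    (Real.antitoneOn_rpow_Ioi_of_exponent_nonpos (by linarith)).mono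
      fun u hu => hp.trans_le hu.1
  have hzero : (0 : ℝ) ∉ Set.uIcc p (p + n) := by
    rw [Set.uIcc_of_le (by linarith [n.cast_nonneg (α := ℝ)])]
    exact fun h => hp.not_ge h.1
  calc ∑ i ∈ range n, (p + ↑(i + 1)) ^ (-(s + 1))
      ≤ ∫ u in p..p + n, u ^ (-(s + 1)) := hanti.sum_le_integral
    _ = (p ^ (-s) - (p + n) ^ (-s)) / s := by
      rw [integral_rpow (Or.inr ⟨by linarith, hzero⟩), show -(s + 1) + 1 = -s by ring]
      ring
    _ ≤ p ^ (-s) / s := by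
      gcongr
      exact sub_le_self _ (Real.rpow_nonneg (by positivity) _)

theorem inv_one_add_sq_rpow_le_rpow_neg {r t : ℝ} (hr : 0 ≤ r) (ht : 0 < t) :
    ((1 + t ^ 2) ^ r)⁻¹ ≤ t ^ (-(2 * r)) := by
  rw [Real.rpow_neg ht.le, Real.rpow_mul ht.le, Real.rpow_two]
  gcongr
  linarith

theorem sum_range_inv_one_add_sq_rpow_le {p r : ℝ} (hp : 0 < p) (hr : 1 / 2 < r) (n : ℕ) :
    ∑ i ∈ range n, ((1 + (p + ↑(i + 1)) ^ 2) ^ r)⁻¹ ≤ p ^ (-(2 * r - 1)) / (2 * r - 1) :=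
  calc ∑ i ∈ range n, ((1 + (p + ↑(i + 1)) ^ 2) ^ r)⁻¹
      ≤ ∑ i ∈ range n, (p + ↑(i + 1)) ^ (-((2 * r - 1) + 1)) := by
        gcongr with i
        rw [show -((2 * r - 1) + 1) = -(2 * r) by ring]
        exact inv_one_add_sq_rpow_le_rpow_neg (by linarith) (by positivity)
    _ ≤ p ^ (-(2 * r - 1)) / (2 * r - 1) := sum_range_rpow_neg_succ_le hp (by linarith) n

theorem summable_abs_and_abs_tsum_le_sqrt_mul_sqrt {f u v : ℕ → ℝ} {A B : ℝ}
    (hu : ∀ i, 0 ≤ u i) (hv : ∀ i, 0 ≤ v i) (hf : ∀ i, |f i| ≤ √(u i) * √(v i))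
    (hA : ∀ n, ∑ i ∈ range n, u i ≤ A) (hB : ∀ n, ∑ i ∈ range n, v i ≤ B) :
    Summable (fun i => |f i|) ∧ |∑' i, f i| ≤ √A * √B := by
  have hpartial : ∀ n, ∑ i ∈ range n, |f i| ≤ √A * √B := fun n => calc
    ∑ i ∈ range n, |f i| ≤ ∑ i ∈ range n, √(u i) * √(v i) := sum_le_sum fun i _ => hf i
    _ ≤ √(∑ i ∈ range n, u i) * √(∑ i ∈ range n, v i) :=
      Real.sum_sqrt_mul_sqrt_le _ hu hv
    _ ≤ √A * √B := by gcongr; exacts [hA n, hB n]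
  have hsum : Summable (fun i => |f i|) :=
    summable_of_sum_range_le (fun _ => abs_nonneg _) hpartial
  refine ⟨hsum, ?_⟩
  calc |∑' i, f i| ≤ ∑' i, |f i| := by
        simpa only [Real.norm_eq_abs] using norm_tsum_le_tsum_norm (f := f) hsum
    _ ≤ √A * √B := Real.tsum_le_of_sum_range_le (fun _ => abs_nonneg _) hpartial

theorem sum_range_comp_add_le_tsum {F : ℕ → ℝ} (hF : Summable F) (hF0 : ∀ i, 0 ≤ F i) (k n : ℕ) :
    ∑ i ∈ range n, F (k + i) ≤ ∑' i, F i :=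
  ((hF.comp_injective (add_right_injective k)).sum_le_tsum _ fun _ _ => hF0 _).trans
    (tsum_comp_le_tsum_of_inj hF hF0 (add_right_injective k))

/-- Let `r > 1/2`. There is a constant `C > 0` depending only on `r` such that for every
real sequence `a` with `M := ∑_{i=0}^∞ a_i² (1+i²)^r < ∞`, every integer `p ≥ 1` and every
`x ∈ [-1,1]`, the tail of the Chebyshev expansion `∑_{i=p+1}^∞ a_i T_i(x)` converges
absolutely and `|∑_{i=p+1}^∞ a_i T_i(x)| ≤ C · p^{-(r-1/2)} · M^{1/2}`. -/
theorem chebyshev_tail_uniform_bound (r : ℝ) (hr : 1 / 2 < r) :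
    ∃ C : ℝ, 0 < C ∧ ∀ a : ℕ → ℝ,
      Summable (fun i : ℕ => (a i) ^ 2 * ((1 : ℝ) + (i : ℝ) ^ 2) ^ r) →
      ∀ p : ℕ, 1 ≤ p → ∀ x : ℝ, x ∈ Set.Icc (-1 : ℝ) 1 →
        Summable (fun i : ℕ =>
          |a (p + 1 + i) * (Polynomial.Chebyshev.T ℝ ((p + 1 + i : ℕ) : ℤ)).eval x|) ∧
        |∑' i : ℕ, a (p + 1 + i) * (Polynomial.Chebyshev.T ℝ ((p + 1 + i : ℕ) : ℤ)).eval x| ≤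
          C * (p : ℝ) ^ (-(r - 1 / 2)) *
            Real.sqrt (∑' i : ℕ, (a i) ^ 2 * ((1 : ℝ) + (i : ℝ) ^ 2) ^ r) := by
  have hs : 0 < 2 * r - 1 := by linarith
  refine ⟨√(2 * r - 1)⁻¹, by positivity, fun a ha p hp x hx => ?_⟩
  set w : ℕ → ℝ := fun i => (1 + (i : ℝ) ^ 2) ^ r
  have hp0 : (0 : ℝ) < p := by exact_mod_cast hp
  have hterm : ∀ i, |a (p + 1 + i) * (Chebyshev.T ℝ ((p + 1 + i : ℕ) : ℤ)).eval x| ≤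
      √(a (p + 1 + i) ^ 2 * w (p + 1 + i)) * √(w (p + 1 + i))⁻¹ := fun i => by
    have hw : 0 < w (p + 1 + i) := by positivity
    rw [← Real.sqrt_mul (by positivity), mul_assoc, mul_inv_cancel₀ hw.ne', mul_one,
      Real.sqrt_sq_eq_abs, abs_mul]
    exact mul_le_of_le_one_right (abs_nonneg _)
      (Chebyshev.abs_eval_T_real_le_one _ (abs_le.2 hx))
  have hweights : ∀ n,
      ∑ i ∈ range n, (w (p + 1 + i))⁻¹ ≤ (p : ℝ) ^ (-(2 * r - 1)) / (2 * r - 1) := by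
    simpa only [w, Nat.cast_add, Nat.cast_one, add_assoc, add_comm 1]
      using sum_range_inv_one_add_sq_rpow_le hp0 hr
  obtain ⟨hsum, hle⟩ := summable_abs_and_abs_tsum_le_sqrt_mul_sqrt (fun _ => by positivity)
    (fun _ => by positivity) hterm (sum_range_comp_add_le_tsum ha (fun _ => by positivity) (p + 1))
    hweights
  refine ⟨hsum, hle.trans_eq ?_⟩
  have hsqrt : √((p : ℝ) ^ (-(2 * r - 1))) = (p : ℝ) ^ (-(r - 1 / 2)) := by
    rw [Real.sqrt_eq_rpow, ← Real.rpow_mul hp0.le]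
    ring_nf
  rw [Real.sqrt_div' _ hs.le, hsqrt, Real.sqrt_inv]
  ring
end

section
/- Let θ : ℝ² → ℝ be a C^∞ function with compact support and ∫_{ℝ²} θ(a) da = 1, and let ψ : ℝ² → ℝ be a C^∞ function. Define Rψ = (R₁, R₂) by R₁(x) = -∫_{ℝ²} θ(a)(x₂-a₂) ∫₀¹ t ψ(a + t(x-a)) dt da and R₂(x) = ∫_{ℝ²} θ(a)(x₁-a₁) ∫₀¹ t ψ(a + t(x-a)) dt da. Then R₁ and R₂ are differentiable and for every x ∈ ℝ², ∂R₂/∂x₁(x) - ∂R₁/∂x₂(x) = ψ(x); that is, the regularized Poincaré operator R is a right inverse of the scalar curl operator. -/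
set_option maxHeartbeats 1000000
set_option synthInstance.maxHeartbeats 200000

open MeasureTheory Metric Set

namespace RegPoincareAux

noncomputable def gg (ψ : ℝ × ℝ → ℝ) (x a : ℝ × ℝ) : ℝ :=
  ∫ t in (0:ℝ)..1, t * ψ (a + t • (x - a))

noncomputable def LL (ψ : ℝ × ℝ → ℝ) (x a : ℝ × ℝ) : (ℝ × ℝ) →L[ℝ] ℝ :=
  ∫ t in (0:ℝ)..1, (t ^ 2) • fderiv ℝ ψ (a + t • (x - a))

lemma curve_hasDerivAt (x a : ℝ × ℝ) (t : ℝ) :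
    HasDerivAt (fun s : ℝ => a + s • (x - a)) (x - a) t := by
  simpa using ((hasDerivAt_id t).smul_const (x - a)).const_add a

lemma curve_hasFDerivAt (a : ℝ × ℝ) (t : ℝ) (x : ℝ × ℝ) :
    HasFDerivAt (fun y : ℝ × ℝ => a + t • (y - a))
      (t • ContinuousLinearMap.id ℝ (ℝ × ℝ)) x := by
  simpa using (((hasFDerivAt_id x).sub_const a).const_smul t).const_add a

lemma curve_continuous (x a : ℝ × ℝ) : Continuous fun t : ℝ => a + t • (x - a) :=
  continuous_const.add (continuous_id.smul continuous_const)

lemma norm_curve_le (x a : ℝ × ℝ) {t : ℝ} (ht : |t| ≤ 1) :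
    ‖a + t • (x - a)‖ ≤ 2 * ‖a‖ + ‖x‖ := by
  have h1 := norm_add_le a (t • (x - a))
  have h2 : ‖t • (x - a)‖ = |t| * ‖x - a‖ := by
    rw [norm_smul, Real.norm_eq_abs]
  have h3 := norm_sub_le x a
  nlinarith [norm_nonneg (x - a), norm_nonneg a, abs_nonneg t]

variable {ψ : ℝ × ℝ → ℝ}

lemma hasFDerivAt_gg (hψ : ContDiff ℝ (⊤ : ℕ∞) ψ) (a x : ℝ × ℝ) :
    HasFDerivAt (fun y => gg ψ y a) (LL ψ x a) x := by
  have hψd : Differentiable ℝ ψ := hψ.differentiable (by simp)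
  have hψc : Continuous ψ := hψ.continuous
  have hDc : Continuous (fderiv ℝ ψ) := hψ.continuous_fderiv (by simp)
  obtain ⟨C, hC⟩ := (isCompact_closedBall (0 : ℝ × ℝ) (2 * ‖a‖ + ‖x‖ + 1)).exists_bound_of_continuousOn
    hDc.continuousOn
  have hC0 : 0 ≤ C := le_trans (norm_nonneg _) (hC 0 (by simp; positivity))
  simp only [gg, LL]
  apply intervalIntegral.hasFDerivAt_integral_of_dominated_of_fderiv_le
    (F' := fun y t => (t ^ 2) • fderiv ℝ ψ (a + t • (y - a))) (bound := fun _ => C) (ball_mem_nhds x one_pos)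
  · filter_upwards with y
    exact (continuous_id.mul (hψc.comp (curve_continuous y a))).aestronglyMeasurable
  · exact (continuous_id.mul (hψc.comp (curve_continuous x a))).intervalIntegrable _ _
  · exact ((continuous_pow 2).smul (hDc.comp (curve_continuous x a))).aestronglyMeasurable
  · filter_upwards with t
    intro ht y hy
    rw [Set.uIoc_of_le (zero_le_one' ℝ)] at ht
    have htabs : |t| ≤ 1 := by rw [abs_of_pos ht.1]; exact ht.2
    have hyn : ‖y‖ ≤ ‖x‖ + 1 := by
      have := mem_ball_iff_norm.mp hy
      have h2 := norm_add_le (y - x) x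
      simp only [sub_add_cancel] at h2
      linarith
    have hpt : ‖a + t • (y - a)‖ ≤ 2 * ‖a‖ + ‖x‖ + 1 := by
      have := norm_curve_le y a htabs
      linarith
    have hDb : ‖fderiv ℝ ψ (a + t • (y - a))‖ ≤ C :=
      hC _ (by simpa [mem_closedBall_zero_iff] using hpt)
    have ht2 : ‖t ^ 2‖ ≤ 1 := by
      rw [Real.norm_eq_abs, abs_pow]
      exact pow_le_one₀ (abs_nonneg t) htabs
    refine (norm_smul_le (t ^ 2) (fderiv ℝ ψ (a + t • (y - a)))).trans ?_
    calc ‖t ^ 2‖ * ‖fderiv ℝ ψ (a + t • (y - a))‖ ≤ 1 * C :=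
          mul_le_mul ht2 hDb (norm_nonneg _) zero_le_one
      _ = C := one_mul C
  · exact intervalIntegrable_const
  · filter_upwards with t
    intro ht y hy
    have h1 := curve_hasFDerivAt a t y
    have h2 := (hψd _).hasFDerivAt.comp y h1
    have h3 := h2.const_mul t
    have heq : t • ((fderiv ℝ ψ (a + t • (y - a))).comp (t • ContinuousLinearMap.id ℝ (ℝ × ℝ)))
        = (t ^ 2) • fderiv ℝ ψ (a + t • (y - a)) := by
      refine ContinuousLinearMap.ext fun v => ?_
      simp only [ContinuousLinearMap.smul_apply, ContinuousLinearMap.coe_comp',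
        Function.comp_apply, ContinuousLinearMap.coe_id', id_eq, smul_eq_mul,
        ContinuousLinearMap.map_smul]
      ring
    exact heq ▸ h3

lemma continuous_gg (hψ : ContDiff ℝ (⊤ : ℕ∞) ψ) (x : ℝ × ℝ) :
    Continuous fun a => gg ψ x a := by
  have hψc : Continuous ψ := hψ.continuous
  have h : Continuous (Function.uncurry fun (a : ℝ × ℝ) (t : ℝ) => t * ψ (a + t • (x - a))) := by
    apply Continuous.mul continuous_snd
    exact hψc.comp (continuous_fst.add (continuous_snd.smul (continuous_const.sub continuous_fst)))
  exact intervalIntegral.continuous_parametric_intervalIntegral_of_continuous' h 0 1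

lemma continuous_LL (hψ : ContDiff ℝ (⊤ : ℕ∞) ψ) (x : ℝ × ℝ) :
    Continuous fun a => LL ψ x a := by
  have hDc : Continuous (fderiv ℝ ψ) := hψ.continuous_fderiv (by simp)
  have h : Continuous (Function.uncurry fun (a : ℝ × ℝ) (t : ℝ) =>
      (t ^ 2) • fderiv ℝ ψ (a + t • (x - a))) := by
    apply Continuous.smul (continuous_snd.pow 2)
    exact hDc.comp (continuous_fst.add (continuous_snd.smul (continuous_const.sub continuous_fst)))
  exact intervalIntegral.continuous_parametric_intervalIntegral_of_continuous' h 0 1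

lemma curl_eq (hψ : ContDiff ℝ (⊤ : ℕ∞) ψ) (x a : ℝ × ℝ) :
    2 * gg ψ x a + LL ψ x a (x - a) = ψ x := by
  have hψd : Differentiable ℝ ψ := hψ.differentiable (by simp)
  have hψc : Continuous ψ := hψ.continuous
  have hDc : Continuous (fderiv ℝ ψ) := hψ.continuous_fderiv (by simp)
  have hcurve := curve_continuous x a
  have hint1 : IntervalIntegrable (fun t : ℝ => (t ^ 2) • fderiv ℝ ψ (a + t • (x - a)))
      volume 0 1 := ((continuous_pow 2).smul (hDc.comp hcurve)).intervalIntegrable _ _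
  have inta : IntervalIntegrable (fun t : ℝ => 2 * (t * ψ (a + t • (x - a)))) volume 0 1 :=
    (continuous_const.mul (continuous_id.mul (hψc.comp hcurve))).intervalIntegrable _ _
  have intb : IntervalIntegrable
      (fun t : ℝ => t ^ 2 * (fderiv ℝ ψ (a + t • (x - a)) (x - a))) volume 0 1 :=
    ((continuous_pow 2).mul (((hDc.comp hcurve).clm_apply continuous_const))).intervalIntegrable _ _
  have h1 : LL ψ x a (x - a) =
      ∫ t in (0:ℝ)..1, t ^ 2 * (fderiv ℝ ψ (a + t • (x - a)) (x - a)) := by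
    rw [LL, ContinuousLinearMap.intervalIntegral_apply hint1]
    simp [smul_eq_mul]
  have h2 : 2 * gg ψ x a = ∫ t in (0:ℝ)..1, 2 * (t * ψ (a + t • (x - a))) := by
    rw [gg, intervalIntegral.integral_const_mul]
  rw [h1, h2, ← intervalIntegral.integral_add inta intb]
  have key : ∀ t ∈ Set.uIcc (0:ℝ) 1,
      HasDerivAt (fun s : ℝ => s ^ 2 * ψ (a + s • (x - a)))
        (2 * (t * ψ (a + t • (x - a))) + t ^ 2 * (fderiv ℝ ψ (a + t • (x - a)) (x - a))) t := by
    intro t _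
    have hc := curve_hasDerivAt x a t
    have hcomp : HasDerivAt (fun s : ℝ => ψ (a + s • (x - a)))
        (fderiv ℝ ψ (a + t • (x - a)) (x - a)) t :=
      (hψd _).hasFDerivAt.comp_hasDerivAt t hc
    have h : HasDerivAt (fun s : ℝ => s ^ 2 * ψ (a + s • (x - a))) _ t :=
      (hasDerivAt_pow 2 t).mul hcomp
    convert h using 1
    push_cast
    ring
  rw [intervalIntegral.integral_eq_sub_of_hasDerivAt key (inta.add intb)]
  norm_num

lemma main_deriv (hψ : ContDiff ℝ (⊤ : ℕ∞) ψ) {θ : ℝ × ℝ → ℝ} (hθ : Continuous θ)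
    (hθc : HasCompactSupport θ) (e : (ℝ × ℝ) →L[ℝ] ℝ) (x₀ : ℝ × ℝ) :
    HasFDerivAt (fun x => ∫ a : ℝ × ℝ, θ a * (e (x - a) * gg ψ x a))
      (∫ a : ℝ × ℝ, θ a • (e (x₀ - a) • LL ψ x₀ a + gg ψ x₀ a • e)) x₀ := by
  obtain ⟨Rb, hRb⟩ := hθc.isBounded.subset_closedBall 0
  set Rf : ℝ := 2 * Rb + (‖x₀‖ + 1) with hRf
  obtain ⟨C₁, hC₁⟩ := (isCompact_closedBall (0 : ℝ × ℝ) Rf).exists_bound_of_continuousOn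
    hψ.continuous.continuousOn
  obtain ⟨C₂, hC₂⟩ := (isCompact_closedBall (0 : ℝ × ℝ) Rf).exists_bound_of_continuousOn
    (hψ.continuous_fderiv (by simp)).continuousOn
  set M : ℝ := ‖e‖ * (‖x₀‖ + 1 + Rb) with hM
  have hecont : Continuous fun a : ℝ × ℝ => e (x₀ - a) :=
    e.continuous.comp (continuous_const.sub continuous_id)
  apply hasFDerivAt_integral_of_dominated_of_fderiv_le
    (F' := fun x a => θ a • (e (x - a) • LL ψ x a + gg ψ x a • e))
    (bound := fun a => ‖θ a‖ * (M * C₂ + C₁ * ‖e‖)) (ball_mem_nhds x₀ one_pos)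
  · filter_upwards with x
    exact (hθ.mul (((e.continuous.comp (continuous_const.sub continuous_id))).mul
      (continuous_gg hψ x))).aestronglyMeasurable
  · apply Continuous.integrable_of_hasCompactSupport
    · exact hθ.mul (hecont.mul (continuous_gg hψ x₀))
    · exact hθc.mul_right
  · exact (hθ.smul ((hecont.smul (continuous_LL hψ x₀)).add
      ((continuous_gg hψ x₀).smul continuous_const))).aestronglyMeasurable
  · filter_upwards with a
    intro x hx
    by_cases hθa : θ a = 0
    · simp [hθa]
    · have ha : ‖a‖ ≤ Rb := by
        have : a ∈ tsupport θ := subset_tsupport θ (by simpa [Function.mem_support] using hθa)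
        simpa [mem_closedBall_zero_iff] using hRb this
    -- basic norms
      have hxn : ‖x‖ ≤ ‖x₀‖ + 1 := by
        have := mem_ball_iff_norm.mp hx
        have h2 := norm_add_le (x - x₀) x₀
        simp only [sub_add_cancel] at h2
        linarith
      have hpt : ∀ t ∈ Set.uIoc (0:ℝ) 1, ‖a + t • (x - a)‖ ≤ Rf := by
        intro t ht
        rw [Set.uIoc_of_le (zero_le_one' ℝ)] at ht
        have htabs : |t| ≤ 1 := by rw [abs_of_pos ht.1]; exact ht.2
        have := norm_curve_le x a htabs
        simp only [hRf]
        linarith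
      have hg : ‖gg ψ x a‖ ≤ C₁ := by
        rw [gg]
        have := intervalIntegral.norm_integral_le_of_norm_le_const (C := C₁)
          (f := fun t : ℝ => t * ψ (a + t • (x - a))) (a := 0) (b := 1) ?_
        · simpa using this
        · intro t ht
          have hb := hC₁ _ (by simpa [mem_closedBall_zero_iff] using hpt t ht)
          rw [Set.uIoc_of_le (zero_le_one' ℝ)] at ht
          have htabs : |t| ≤ 1 := by rw [abs_of_pos ht.1]; exact ht.2
          rw [norm_mul, Real.norm_eq_abs]
          calc |t| * ‖ψ (a + t • (x - a))‖ ≤ 1 * C₁ :=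
                mul_le_mul htabs hb (norm_nonneg _) zero_le_one
            _ = C₁ := one_mul _
      have hL : ‖LL ψ x a‖ ≤ C₂ := by
        rw [LL]
        have := intervalIntegral.norm_integral_le_of_norm_le_const (C := C₂)
          (f := fun t : ℝ => (t ^ 2) • fderiv ℝ ψ (a + t • (x - a))) (a := 0) (b := 1) ?_
        · simpa using this
        · intro t ht
          have hb := hC₂ _ (by simpa [mem_closedBall_zero_iff] using hpt t ht)
          rw [Set.uIoc_of_le (zero_le_one' ℝ)] at ht
          have htabs : |t| ≤ 1 := by rw [abs_of_pos ht.1]; exact ht.2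
          rw [norm_smul, Real.norm_eq_abs, abs_pow]
          calc |t| ^ 2 * ‖fderiv ℝ ψ (a + t • (x - a))‖ ≤ 1 * C₂ :=
                mul_le_mul (pow_le_one₀ (abs_nonneg t) htabs) hb (norm_nonneg _) zero_le_one
            _ = C₂ := one_mul _
      have hxa : ‖x - a‖ ≤ ‖x₀‖ + 1 + Rb := by
        have := norm_sub_le x a
        linarith
      have he : ‖e (x - a)‖ ≤ M := by
        calc ‖e (x - a)‖ ≤ ‖e‖ * ‖x - a‖ := e.le_opNorm _
          _ ≤ M := by rw [hM]; exact mul_le_mul_of_nonneg_left hxa (norm_nonneg e)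
      have hM0 : 0 ≤ M := le_trans (norm_nonneg _) he
      refine (norm_smul_le (θ a) (e (x - a) • LL ψ x a + gg ψ x a • e)).trans ?_
      apply mul_le_mul_of_nonneg_left _ (norm_nonneg (θ a))
      calc ‖e (x - a) • LL ψ x a + gg ψ x a • e‖
          ≤ ‖e (x - a) • LL ψ x a‖ + ‖gg ψ x a • e‖ := norm_add_le _ _
        _ ≤ ‖e (x - a)‖ * ‖LL ψ x a‖ + ‖gg ψ x a‖ * ‖e‖ := by
            gcongr
            · exact norm_smul_le (e (x - a)) (LL ψ x a)
            · exact norm_smul_le (gg ψ x a) e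
        _ ≤ M * C₂ + C₁ * ‖e‖ :=
            add_le_add (mul_le_mul he hL (norm_nonneg _) hM0)
              (mul_le_mul_of_nonneg_right hg (norm_nonneg _))
  · exact ((hθ.norm.mul continuous_const).integrable_of_hasCompactSupport
      hθc.norm.mul_right)
  · filter_upwards with a
    intro x hx
    have h1 : HasFDerivAt (fun x : ℝ × ℝ => e (x - a)) e x := by
      simpa [Function.comp_def] using e.hasFDerivAt.comp x ((hasFDerivAt_id x).sub_const a)
    exact (h1.mul (hasFDerivAt_gg hψ a x)).const_mul (θ a)

end RegPoincareAux

open RegPoincareAux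

/-- The regularized Poincaré operator `R` is a right inverse of the scalar curl: if
`θ : ℝ² → ℝ` is smooth, compactly supported with `∫ θ = 1`, `ψ : ℝ² → ℝ` is smooth, and
`Rψ = (R₁, R₂)` is given by the Costabel–McIntosh formulas, then `R₁, R₂` are
differentiable and `∂R₂/∂x₁ - ∂R₁/∂x₂ = ψ`. -/
theorem regularized_poincare_right_inverse_curl
    (θ ψ : ℝ × ℝ → ℝ) (hθ : ContDiff ℝ (⊤ : ℕ∞) θ) (hθc : HasCompactSupport θ)
    (hθ1 : ∫ a : ℝ × ℝ, θ a = 1) (hψ : ContDiff ℝ (⊤ : ℕ∞) ψ)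
    (R₁ R₂ : ℝ × ℝ → ℝ)
    (hR₁ : ∀ x : ℝ × ℝ,
      R₁ x = -∫ a : ℝ × ℝ, θ a * (x.2 - a.2) * ∫ t in (0 : ℝ)..1, t * ψ (a + t • (x - a)))
    (hR₂ : ∀ x : ℝ × ℝ,
      R₂ x = ∫ a : ℝ × ℝ, θ a * (x.1 - a.1) * ∫ t in (0 : ℝ)..1, t * ψ (a + t • (x - a))) :
    Differentiable ℝ R₁ ∧ Differentiable ℝ R₂ ∧
    ∀ x : ℝ × ℝ, fderiv ℝ R₂ x (1, 0) - fderiv ℝ R₁ x (0, 1) = ψ x := by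
  have hθcont : Continuous θ := hθ.continuous
  set e₁ : (ℝ × ℝ) →L[ℝ] ℝ := ContinuousLinearMap.fst ℝ ℝ ℝ with he₁
  set e₂ : (ℝ × ℝ) →L[ℝ] ℝ := ContinuousLinearMap.snd ℝ ℝ ℝ with he₂
  have hgR₂ : R₂ = fun x => ∫ a : ℝ × ℝ, θ a * (e₁ (x - a) * gg ψ x a) := by
    funext x
    rw [hR₂ x]
    congr 1
    funext a
    simp [gg, he₁, mul_assoc]
  have hgR₁ : R₁ = fun x => -∫ a : ℝ × ℝ, θ a * (e₂ (x - a) * gg ψ x a) := by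
    funext x
    rw [hR₁ x]
    congr 2
    funext a
    simp [gg, he₂, mul_assoc]
  have hD2 : ∀ x : ℝ × ℝ, HasFDerivAt R₂
      (∫ a : ℝ × ℝ, θ a • (e₁ (x - a) • LL ψ x a + gg ψ x a • e₁)) x := by
    intro x
    rw [hgR₂]
    exact main_deriv hψ hθcont hθc e₁ x
  have hD1 : ∀ x : ℝ × ℝ, HasFDerivAt R₁
      (-∫ a : ℝ × ℝ, θ a • (e₂ (x - a) • LL ψ x a + gg ψ x a • e₂)) x := by
    intro x
    rw [hgR₁]
    exact (main_deriv hψ hθcont hθc e₂ x).neg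
  refine ⟨fun x => (hD1 x).differentiableAt, fun x => (hD2 x).differentiableAt, ?_⟩
  intro x
  rw [(hD2 x).fderiv, (hD1 x).fderiv]
  have hInt : ∀ e : (ℝ × ℝ) →L[ℝ] ℝ,
      Integrable (fun a : ℝ × ℝ => θ a • (e (x - a) • LL ψ x a + gg ψ x a • e)) := by
    intro e
    apply Continuous.integrable_of_hasCompactSupport
    · exact hθcont.smul (((e.continuous.comp (continuous_const.sub continuous_id)).smul
        (continuous_LL hψ x)).add ((continuous_gg hψ x).smul continuous_const))
    · exact hθc.smul_right
  rw [ContinuousLinearMap.neg_apply, sub_neg_eq_add,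
    ContinuousLinearMap.integral_apply (hInt e₁) (1, 0),
    ContinuousLinearMap.integral_apply (hInt e₂) (0, 1)]
  have happ : ∀ (e : (ℝ × ℝ) →L[ℝ] ℝ) (v : ℝ × ℝ),
      Integrable (fun a : ℝ × ℝ => (θ a • (e (x - a) • LL ψ x a + gg ψ x a • e)) v) := by
    intro e v
    have hWc : Continuous fun a : ℝ × ℝ => (e (x - a) • LL ψ x a + gg ψ x a • e) v :=
      (((e.continuous.comp (continuous_const.sub continuous_id)).smul
        (continuous_LL hψ x)).add ((continuous_gg hψ x).smul continuous_const)).clm_apply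
        continuous_const
    exact Continuous.integrable_of_hasCompactSupport (hθcont.smul hWc) hθc.smul_right
  rw [← integral_add (happ e₁ (1, 0)) (happ e₂ (0, 1))]
  have hptwise : ∀ a : ℝ × ℝ,
      (θ a • (e₁ (x - a) • LL ψ x a + gg ψ x a • e₁)) (1, 0)
        + (θ a • (e₂ (x - a) • LL ψ x a + gg ψ x a • e₂)) (0, 1) = θ a * ψ x := by
    intro a
    have hxa : (x - a) = (x.1 - a.1) • ((1:ℝ), (0:ℝ)) + (x.2 - a.2) • ((0:ℝ), (1:ℝ)) := by
      ext <;> simp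
    have hdec : LL ψ x a (x - a)
        = (x.1 - a.1) * LL ψ x a (1, 0) + (x.2 - a.2) * LL ψ x a (0, 1) := by
      rw [hxa, map_add, _root_.map_smul, _root_.map_smul, smul_eq_mul, smul_eq_mul]
    have hcurl := curl_eq hψ x a
    simp only [ContinuousLinearMap.smul_apply, ContinuousLinearMap.add_apply,
      smul_eq_mul, he₁, he₂, ContinuousLinearMap.coe_fst', ContinuousLinearMap.coe_snd',
      Prod.fst_sub, Prod.snd_sub] at hdec ⊢
    simp only [mul_one, mul_zero]
    linear_combination θ a * hcurl - θ a * hdec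
  rw [integral_congr_ae (Filter.Eventually.of_forall hptwise),
    MeasureTheory.integral_mul_const, hθ1, one_mul]
end

section
/- Let θ : ℝ² → ℝ be a C^∞ function with compact support and ∫_{ℝ²} θ(a) da = 1, and let u = (u₁,u₂) : ℝ² → ℝ² be a C^∞ vector field that is curl-free, i.e. ∂u₂/∂x₁(x) = ∂u₁/∂x₂(x) for all x ∈ ℝ². Define Au(x) = ∫_{ℝ²} θ(a) [ (x₁-a₁) ∫₀¹ u₁(a + t(x-a)) dt + (x₂-a₂) ∫₀¹ u₂(a + t(x-a)) dt ] da. Then Au is differentiable and ∇(Au)(x) = u(x) for every x ∈ ℝ²; that is, on curl-free fields the regularized Poincaré operator A is a right inverse of the gradient. -/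
open MeasureTheory

section helpers
open ContinuousLinearMap Metric
noncomputable def toCLM (w : ℝ × ℝ) : (ℝ × ℝ) →L[ℝ] ℝ :=
  w.1 • ContinuousLinearMap.fst ℝ ℝ ℝ + w.2 • ContinuousLinearMap.snd ℝ ℝ ℝ

@[simp] lemma toCLM_apply (w v : ℝ × ℝ) : toCLM w v = w.1 * v.1 + w.2 * v.2 := by
  simp [toCLM]

lemma clm_ext2 {f g : (ℝ × ℝ) →L[ℝ] ℝ} (h1 : f (1,0) = g (1,0)) (h2 : f (0,1) = g (0,1)) :
    f = g := by
  ext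
  · simpa using h1
  · simpa using h2

noncomputable def pder (u : ℝ × ℝ → ℝ × ℝ) (t : ℝ) (x : ℝ × ℝ) : (ℝ × ℝ) →L[ℝ] ℝ :=
  x.1 • ((ContinuousLinearMap.fst ℝ ℝ ℝ).comp ((fderiv ℝ u (t • x)).comp (t • ContinuousLinearMap.id ℝ (ℝ × ℝ)))) +
  (u (t • x)).1 • ContinuousLinearMap.fst ℝ ℝ ℝ +
  (x.2 • ((ContinuousLinearMap.snd ℝ ℝ ℝ).comp ((fderiv ℝ u (t • x)).comp (t • ContinuousLinearMap.id ℝ (ℝ × ℝ)))) +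
  (u (t • x)).2 • ContinuousLinearMap.snd ℝ ℝ ℝ)

lemma pder_apply (u : ℝ × ℝ → ℝ × ℝ) (t : ℝ) (x v : ℝ × ℝ) :
    pder u t x v = x.1 * (fderiv ℝ u (t • x) (t • v)).1 + (u (t • x)).1 * v.1 +
      (x.2 * (fderiv ℝ u (t • x) (t • v)).2 + (u (t • x)).2 * v.2) := by
  simp [pder]

lemma pder_hasFDerivAt (u : ℝ × ℝ → ℝ × ℝ) (hu : ContDiff ℝ (⊤ : ℕ∞) u) (t : ℝ) (x : ℝ × ℝ) :
    HasFDerivAt (fun y : ℝ × ℝ => (u (t • y)).1 * y.1 + (u (t • y)).2 * y.2)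
      (pder u t x) x := by
  have hsm : HasFDerivAt (fun y : ℝ × ℝ => t • y) (t • ContinuousLinearMap.id ℝ (ℝ × ℝ)) x := by
    exact (t • ContinuousLinearMap.id ℝ (ℝ × ℝ)).hasFDerivAt (x := x)
  have hu' : HasFDerivAt u (fderiv ℝ u (t • x)) (t • x) :=
    (hu.differentiable (by simp) (t • x)).hasFDerivAt
  have h1 : HasFDerivAt (fun y : ℝ × ℝ => u (t • y))
      ((fderiv ℝ u (t • x)).comp (t • ContinuousLinearMap.id ℝ (ℝ × ℝ))) x :=
    hu'.comp x hsm
  have h1a := ((ContinuousLinearMap.fst ℝ ℝ ℝ).hasFDerivAt.comp x h1).mul (hasFDerivAt_fst (𝕜 := ℝ) (p := x))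
  have h2a := ((ContinuousLinearMap.snd ℝ ℝ ℝ).hasFDerivAt.comp x h1).mul (hasFDerivAt_snd (𝕜 := ℝ) (p := x))
  have h := h1a.add h2a
  apply h.congr_fderiv
  apply clm_ext2 <;> · simp [pder] ; ring
lemma cont_pder (u : ℝ × ℝ → ℝ × ℝ) (hu : ContDiff ℝ (⊤ : ℕ∞) u) (x : ℝ × ℝ) :
    Continuous (fun t : ℝ => pder u t x) := by
  have hD : Continuous (fun y : ℝ × ℝ => fderiv ℝ u y) := hu.continuous_fderiv (by simp)
  have hsx : Continuous (fun t : ℝ => t • x) := continuous_id.smul continuous_const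
  have hDc : Continuous (fun t : ℝ => fderiv ℝ u (t • x)) := hD.comp hsx
  have hid : Continuous (fun t : ℝ => t • ContinuousLinearMap.id ℝ (ℝ × ℝ)) :=
    continuous_id.smul continuous_const
  have hcomp : Continuous (fun t : ℝ =>
      (fderiv ℝ u (t • x)).comp (t • ContinuousLinearMap.id ℝ (ℝ × ℝ))) :=
    hDc.clm_comp hid
  have hu1 : Continuous (fun t : ℝ => (u (t • x)).1) := (hu.continuous.comp hsx).fst
  have hu2 : Continuous (fun t : ℝ => (u (t • x)).2) := (hu.continuous.comp hsx).snd
  unfold pder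
  exact (((continuous_const : Continuous fun _ : ℝ => x.1).smul ((continuous_const : Continuous fun _ : ℝ => (ContinuousLinearMap.fst ℝ ℝ ℝ)).clm_comp hcomp)).add
    (hu1.smul continuous_const)).add
    (((continuous_const : Continuous fun _ : ℝ => x.2).smul ((continuous_const : Continuous fun _ : ℝ => (ContinuousLinearMap.snd ℝ ℝ ℝ)).clm_comp hcomp)).add
    (hu2.smul continuous_const))
lemma pder_bound (u : ℝ × ℝ → ℝ × ℝ) (hu : ContDiff ℝ (⊤ : ℕ∞) u) (x₀ : ℝ × ℝ) :
    ∃ C : ℝ, ∀ t ∈ Set.uIoc (0:ℝ) 1, ∀ x ∈ ball x₀ 1, ‖pder u t x‖ ≤ C := by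
  set R : ℝ := ‖x₀‖ + 1 with hR
  have hRnn : 0 ≤ R := by positivity
  obtain ⟨C₁, hC₁⟩ := (isCompact_closedBall (0 : ℝ × ℝ) R).exists_bound_of_continuousOn
    hu.continuous.continuousOn
  obtain ⟨C₂, hC₂⟩ := (isCompact_closedBall (0 : ℝ × ℝ) R).exists_bound_of_continuousOn
    (hu.continuous_fderiv (by simp)).continuousOn
  refine ⟨R * (max C₂ 0) + max C₁ 0 + (R * (max C₂ 0) + max C₁ 0), ?_⟩
  intro t ht x hx
  have ht' : |t| ≤ 1 := by
    rw [Set.uIoc_of_le (by norm_num : (0:ℝ) ≤ 1)] at ht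
    rw [abs_le]; constructor <;> [linarith [ht.1]; exact ht.2]
  have hxR : ‖x‖ ≤ R := by
    have h1 := mem_ball_iff_norm.mp hx
    have h2 : ‖x‖ ≤ ‖x₀‖ + ‖x - x₀‖ := by
      simpa using norm_add_le x₀ (x - x₀)
    linarith
  have htx : t • x ∈ closedBall (0 : ℝ × ℝ) R := by
    rw [mem_closedBall_zero_iff, norm_smul]
    have : ‖t‖ * ‖x‖ ≤ 1 * R := mul_le_mul ht' hxR (norm_nonneg _) zero_le_one
    linarith
  have hDle : ‖fderiv ℝ u (t • x)‖ ≤ max C₂ 0 := le_max_of_le_left (hC₂ _ htx)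
  have hule : ‖u (t • x)‖ ≤ max C₁ 0 := le_max_of_le_left (hC₁ _ htx)
  have hidle : ‖t • ContinuousLinearMap.id ℝ (ℝ × ℝ)‖ ≤ 1 := by
    refine le_trans (ContinuousLinearMap.opNorm_smul_le _ _) ?_
    have : ‖t‖ * ‖ContinuousLinearMap.id ℝ (ℝ × ℝ)‖ ≤ 1 * 1 :=
      mul_le_mul ht' norm_id_le (norm_nonneg _) zero_le_one
    linarith
  set g := (fderiv ℝ u (t • x)).comp (t • ContinuousLinearMap.id ℝ (ℝ × ℝ)) with hg
  have hcompB : ‖g‖ ≤ max C₂ 0 := by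
    have h1 := opNorm_comp_le (fderiv ℝ u (t • x)) (t • ContinuousLinearMap.id ℝ (ℝ × ℝ))
    have h2 : ‖fderiv ℝ u (t • x)‖ * ‖t • ContinuousLinearMap.id ℝ (ℝ × ℝ)‖ ≤ max C₂ 0 * 1 :=
      mul_le_mul hDle hidle (norm_nonneg _) (le_max_right _ _)
    rw [hg]; linarith
  have hfstc : ‖(ContinuousLinearMap.fst ℝ ℝ ℝ).comp g‖ ≤ max C₂ 0 := by
    have h1 := opNorm_comp_le (ContinuousLinearMap.fst ℝ ℝ ℝ) g
    have h2 : ‖ContinuousLinearMap.fst ℝ ℝ ℝ‖ * ‖g‖ ≤ 1 * max C₂ 0 :=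
      mul_le_mul (norm_fst_le ℝ ℝ ℝ) hcompB (norm_nonneg _) zero_le_one
    linarith
  have hsndc : ‖(ContinuousLinearMap.snd ℝ ℝ ℝ).comp g‖ ≤ max C₂ 0 := by
    have h1 := opNorm_comp_le (ContinuousLinearMap.snd ℝ ℝ ℝ) g
    have h2 : ‖ContinuousLinearMap.snd ℝ ℝ ℝ‖ * ‖g‖ ≤ 1 * max C₂ 0 :=
      mul_le_mul (norm_snd_le ℝ ℝ ℝ) hcompB (norm_nonneg _) zero_le_one
    linarith
  have hx1 : |x.1| ≤ R := le_trans (by simpa using norm_fst_le x) hxR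
  have hx2 : |x.2| ≤ R := le_trans (by simpa using norm_snd_le x) hxR
  have hu1 : |(u (t • x)).1| ≤ max C₁ 0 := le_trans (by simpa using norm_fst_le (u (t • x))) hule
  have hu2 : |(u (t • x)).2| ≤ max C₁ 0 := le_trans (by simpa using norm_snd_le (u (t • x))) hule
  have e1 : ‖x.1 • ((ContinuousLinearMap.fst ℝ ℝ ℝ).comp g)‖ ≤ R * max C₂ 0 := by
    refine le_trans (ContinuousLinearMap.opNorm_smul_le _ _) ?_
    rw [Real.norm_eq_abs]
    exact mul_le_mul hx1 hfstc (norm_nonneg _) hRnn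
  have e2 : ‖(u (t • x)).1 • ContinuousLinearMap.fst ℝ ℝ ℝ‖ ≤ max C₁ 0 := by
    refine le_trans (ContinuousLinearMap.opNorm_smul_le _ _) ?_
    rw [Real.norm_eq_abs]
    have := mul_le_mul hu1 (norm_fst_le ℝ ℝ ℝ) (norm_nonneg _) (le_max_right C₁ 0)
    linarith
  have e3 : ‖x.2 • ((ContinuousLinearMap.snd ℝ ℝ ℝ).comp g)‖ ≤ R * max C₂ 0 := by
    refine le_trans (ContinuousLinearMap.opNorm_smul_le _ _) ?_
    rw [Real.norm_eq_abs]
    exact mul_le_mul hx2 hsndc (norm_nonneg _) hRnn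
  have e4 : ‖(u (t • x)).2 • ContinuousLinearMap.snd ℝ ℝ ℝ‖ ≤ max C₁ 0 := by
    refine le_trans (ContinuousLinearMap.opNorm_smul_le _ _) ?_
    rw [Real.norm_eq_abs]
    have := mul_le_mul hu2 (norm_snd_le ℝ ℝ ℝ) (norm_nonneg _) (le_max_right C₁ 0)
    linarith
  unfold pder
  rw [← hg]
  have n1 := norm_add_le (x.1 • ((ContinuousLinearMap.fst ℝ ℝ ℝ).comp g) + (u (t • x)).1 • ContinuousLinearMap.fst ℝ ℝ ℝ)
    (x.2 • ((ContinuousLinearMap.snd ℝ ℝ ℝ).comp g) + (u (t • x)).2 • ContinuousLinearMap.snd ℝ ℝ ℝ)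
  have n2 := norm_add_le (x.1 • ((ContinuousLinearMap.fst ℝ ℝ ℝ).comp g)) ((u (t • x)).1 • ContinuousLinearMap.fst ℝ ℝ ℝ)
  have n3 := norm_add_le (x.2 • ((ContinuousLinearMap.snd ℝ ℝ ℝ).comp g)) ((u (t • x)).2 • ContinuousLinearMap.snd ℝ ℝ ℝ)
  linarith
variable {u : ℝ × ℝ → ℝ × ℝ}

lemma curl_comp (hu : ContDiff ℝ (⊤ : ℕ∞) u)
    (hcurl : ∀ x : ℝ × ℝ,
      fderiv ℝ (fun y => (u y).2) x (1, 0) = fderiv ℝ (fun y => (u y).1) x (0, 1))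
    (p : ℝ × ℝ) : (fderiv ℝ u p (1,0)).2 = (fderiv ℝ u p (0,1)).1 := by
  have hd := (hu.differentiable (by simp) p).hasFDerivAt
  have h1 : fderiv ℝ (fun y => (u y).1) p = (ContinuousLinearMap.fst ℝ ℝ ℝ).comp (fderiv ℝ u p) :=
    hd.fst.fderiv
  have h2 : fderiv ℝ (fun y => (u y).2) p = (ContinuousLinearMap.snd ℝ ℝ ℝ).comp (fderiv ℝ u p) :=
    hd.snd.fderiv
  have := hcurl p
  rw [h1, h2] at this
  simpa using this

lemma pder_basis1 (hu : ContDiff ℝ (⊤ : ℕ∞) u)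
    (hcurl : ∀ x : ℝ × ℝ,
      fderiv ℝ (fun y => (u y).2) x (1, 0) = fderiv ℝ (fun y => (u y).1) x (0, 1))
    (t : ℝ) (x : ℝ × ℝ) :
    pder u t x (1,0) = 1 * (u (t • x)).1 + t * (fderiv ℝ u (t • x) x).1 := by
  have hc := curl_comp hu hcurl (t • x)
  set D := fderiv ℝ u (t • x) with hD
  have hx : x = x.1 • ((1:ℝ),(0:ℝ)) + x.2 • ((0:ℝ),(1:ℝ)) := by simp [Prod.ext_iff]
  have hDx : D x = x.1 • D (1,0) + x.2 • D (0,1) := by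
    conv_lhs => rw [hx]
    rw [map_add, D.map_smul, D.map_smul]
  simp only [pder, ← hD, ContinuousLinearMap.add_apply, ContinuousLinearMap.smul_apply,
    ContinuousLinearMap.comp_apply, ContinuousLinearMap.coe_fst', ContinuousLinearMap.coe_snd',
    ContinuousLinearMap.id_apply]
  have ht10 : (t • ((1:ℝ),(0:ℝ))) = ((t:ℝ), (0:ℝ)) := by simp
  rw [hDx]
  have h2 : D (t • ((1:ℝ),(0:ℝ))) = t • D (1,0) := map_smul D t _
  rw [h2]
  simp [hc]
  ring

lemma pder_basis2 (hu : ContDiff ℝ (⊤ : ℕ∞) u)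
    (hcurl : ∀ x : ℝ × ℝ,
      fderiv ℝ (fun y => (u y).2) x (1, 0) = fderiv ℝ (fun y => (u y).1) x (0, 1))
    (t : ℝ) (x : ℝ × ℝ) :
    pder u t x (0,1) = 1 * (u (t • x)).2 + t * (fderiv ℝ u (t • x) x).2 := by
  have hc := curl_comp hu hcurl (t • x)
  set D := fderiv ℝ u (t • x) with hD
  have hx : x = x.1 • ((1:ℝ),(0:ℝ)) + x.2 • ((0:ℝ),(1:ℝ)) := by simp [Prod.ext_iff]
  have hDx : D x = x.1 • D (1,0) + x.2 • D (0,1) := by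
    conv_lhs => rw [hx]
    rw [map_add, D.map_smul, D.map_smul]
  simp only [pder, ← hD, ContinuousLinearMap.add_apply, ContinuousLinearMap.smul_apply,
    ContinuousLinearMap.comp_apply, ContinuousLinearMap.coe_fst', ContinuousLinearMap.coe_snd',
    ContinuousLinearMap.id_apply]
  rw [hDx]
  have h2 : D (t • ((0:ℝ),(1:ℝ))) = t • D (0,1) := map_smul D t _
  rw [h2]
  simp [hc]
  ring

lemma hasDerivAt_comp_line (hu : ContDiff ℝ (⊤ : ℕ∞) u) (x : ℝ × ℝ) (t : ℝ) :
    HasDerivAt (fun s : ℝ => u (s • x)) (fderiv ℝ u (t • x) x) t := by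
  have hline : HasDerivAt (fun s : ℝ => s • x) x t := by
    simpa using (hasDerivAt_id t).smul_const x
  exact (hu.differentiable (by simp) (t • x)).hasFDerivAt.comp_hasDerivAt t hline
lemma potential_hasFDerivAt (hu : ContDiff ℝ (⊤ : ℕ∞) u)
    (hcurl : ∀ x : ℝ × ℝ,
      fderiv ℝ (fun y => (u y).2) x (1, 0) = fderiv ℝ (fun y => (u y).1) x (0, 1))
    (x₀ : ℝ × ℝ) :
    HasFDerivAt (fun x : ℝ × ℝ => ∫ t in (0:ℝ)..1, ((u (t • x)).1 * x.1 + (u (t • x)).2 * x.2))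
      (toCLM (u x₀)) x₀ := by
  obtain ⟨C, hC⟩ := pder_bound u hu x₀
  have hcont : ∀ x : ℝ × ℝ, Continuous (fun t : ℝ => (u (t • x)).1 * x.1 + (u (t • x)).2 * x.2) := by
    intro x
    have hsx : Continuous (fun t : ℝ => t • x) := continuous_id.smul continuous_const
    have huc := hu.continuous.comp hsx
    exact ((huc.fst.mul continuous_const).add (huc.snd.mul continuous_const))
  have key : HasFDerivAt (fun x : ℝ × ℝ => ∫ t in (0:ℝ)..1, ((u (t • x)).1 * x.1 + (u (t • x)).2 * x.2))
      (∫ t in (0:ℝ)..1, pder u t x₀) x₀ := by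
    apply intervalIntegral.hasFDerivAt_integral_of_dominated_of_fderiv_le
      (F' := fun x t => pder u t x) (bound := fun _ => C) (s := ball x₀ 1) (ball_mem_nhds x₀ one_pos)
    · filter_upwards with x
      exact (hcont x).aestronglyMeasurable
    · exact (hcont x₀).intervalIntegrable _ _
    · exact (cont_pder u hu x₀).aestronglyMeasurable
    · filter_upwards with t ht x hx
      exact hC t ht x hx
    · exact intervalIntegrable_const
    · filter_upwards with t _ x _
      exact pder_hasFDerivAt u hu t x
  have hint : IntervalIntegrable (fun t => pder u t x₀) volume 0 1 :=
    (cont_pder u hu x₀).intervalIntegrable _ _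
  have h1 : (∫ t in (0:ℝ)..1, pder u t x₀) (1,0) = (u x₀).1 := by
    rw [ContinuousLinearMap.intervalIntegral_apply hint]
    have heq : ∀ t : ℝ, pder u t x₀ (1,0) = 1 * (u (t • x₀)).1 + t * (fderiv ℝ u (t • x₀) x₀).1 :=
      fun t => pder_basis1 hu hcurl t x₀
    rw [intervalIntegral.integral_congr (fun t _ => heq t)]
    have hderiv : ∀ t ∈ Set.uIcc (0:ℝ) 1,
        HasDerivAt (fun s : ℝ => s * (u (s • x₀)).1)
          (1 * (u (t • x₀)).1 + t * (fderiv ℝ u (t • x₀) x₀).1) t := by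
      intro t _
      have h := ((ContinuousLinearMap.fst ℝ ℝ ℝ).hasFDerivAt.comp_hasDerivAt t
        (hasDerivAt_comp_line hu x₀ t))
      exact (hasDerivAt_id' t).mul h
    have hcd : Continuous (fun t : ℝ => 1 * (u (t • x₀)).1 + t * (fderiv ℝ u (t • x₀) x₀).1) := by
      have hsx : Continuous (fun t : ℝ => t • x₀) := continuous_id.smul continuous_const
      have h1 : Continuous fun t : ℝ => (u (t • x₀)).1 := (hu.continuous.comp hsx).fst
      have h2 : Continuous fun t : ℝ => (fderiv ℝ u (t • x₀) x₀).1 :=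
        (((hu.continuous_fderiv (by simp)).comp hsx).clm_apply continuous_const).fst
      exact (continuous_const.mul h1).add (continuous_id.mul h2)
    rw [intervalIntegral.integral_eq_sub_of_hasDerivAt hderiv (hcd.intervalIntegrable _ _)]
    simp
  have h2 : (∫ t in (0:ℝ)..1, pder u t x₀) (0,1) = (u x₀).2 := by
    rw [ContinuousLinearMap.intervalIntegral_apply hint]
    have heq : ∀ t : ℝ, pder u t x₀ (0,1) = 1 * (u (t • x₀)).2 + t * (fderiv ℝ u (t • x₀) x₀).2 :=
      fun t => pder_basis2 hu hcurl t x₀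
    rw [intervalIntegral.integral_congr (fun t _ => heq t)]
    have hderiv : ∀ t ∈ Set.uIcc (0:ℝ) 1,
        HasDerivAt (fun s : ℝ => s * (u (s • x₀)).2)
          (1 * (u (t • x₀)).2 + t * (fderiv ℝ u (t • x₀) x₀).2) t := by
      intro t _
      have h := ((ContinuousLinearMap.snd ℝ ℝ ℝ).hasFDerivAt.comp_hasDerivAt t
        (hasDerivAt_comp_line hu x₀ t))
      exact (hasDerivAt_id' t).mul h
    have hcd : Continuous (fun t : ℝ => 1 * (u (t • x₀)).2 + t * (fderiv ℝ u (t • x₀) x₀).2) := by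
      have hsx : Continuous (fun t : ℝ => t • x₀) := continuous_id.smul continuous_const
      have h1 : Continuous fun t : ℝ => (u (t • x₀)).2 := (hu.continuous.comp hsx).snd
      have h2 : Continuous fun t : ℝ => (fderiv ℝ u (t • x₀) x₀).2 :=
        (((hu.continuous_fderiv (by simp)).comp hsx).clm_apply continuous_const).snd
      exact (continuous_const.mul h1).add (continuous_id.mul h2)
    rw [intervalIntegral.integral_eq_sub_of_hasDerivAt hderiv (hcd.intervalIntegrable _ _)]
    simp
  have : (∫ t in (0:ℝ)..1, pder u t x₀) = toCLM (u x₀) := by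
    apply clm_ext2
    · rw [h1]; simp [toCLM]
    · rw [h2]; simp [toCLM]
  rwa [this] at key

end helpers

/-- On curl-free fields the regularized Poincaré operator `A` is a right inverse of the
gradient: if `θ : ℝ² → ℝ` is smooth, compactly supported with `∫ θ = 1`, `u : ℝ² → ℝ²` is a
smooth curl-free vector field, and `Au` is given by the Costabel–McIntosh formula, then
`Au` is differentiable and `∇(Au) = u`. -/
theorem regularized_poincare_right_inverse_grad
    (θ : ℝ × ℝ → ℝ) (u : ℝ × ℝ → ℝ × ℝ)
    (hθ : ContDiff ℝ (⊤ : ℕ∞) θ) (hθc : HasCompactSupport θ)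
    (hθ1 : ∫ a : ℝ × ℝ, θ a = 1) (hu : ContDiff ℝ (⊤ : ℕ∞) u)
    (hcurl : ∀ x : ℝ × ℝ,
      fderiv ℝ (fun y => (u y).2) x (1, 0) = fderiv ℝ (fun y => (u y).1) x (0, 1))
    (A : ℝ × ℝ → ℝ)
    (hA : ∀ x : ℝ × ℝ,
      A x = ∫ a : ℝ × ℝ, θ a *
        ((x.1 - a.1) * (∫ t in (0 : ℝ)..1, (u (a + t • (x - a))).1) +
         (x.2 - a.2) * (∫ t in (0 : ℝ)..1, (u (a + t • (x - a))).2))) :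
    Differentiable ℝ A ∧
    ∀ x : ℝ × ℝ, fderiv ℝ A x (1, 0) = (u x).1 ∧ fderiv ℝ A x (0, 1) = (u x).2 := by
  set φ : ℝ × ℝ → ℝ :=
    fun x => ∫ t in (0:ℝ)..1, ((u (t • x)).1 * x.1 + (u (t • x)).2 * x.2) with hφdef
  have hφ : ∀ x : ℝ × ℝ, HasFDerivAt φ (toCLM (u x)) x := fun x =>
    potential_hasFDerivAt hu hcurl x
  have hφdiff : Differentiable ℝ φ := fun x => (hφ x).differentiableAt
  have hφc : Continuous φ := hφdiff.continuous
  -- segment identity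
  have hseg : ∀ a x : ℝ × ℝ,
      (x.1 - a.1) * (∫ t in (0 : ℝ)..1, (u (a + t • (x - a))).1) +
      (x.2 - a.2) * (∫ t in (0 : ℝ)..1, (u (a + t • (x - a))).2) = φ x - φ a := by
    intro a x
    have hline : Continuous (fun t : ℝ => a + t • (x - a)) :=
      continuous_const.add (continuous_id.smul continuous_const)
    have hcu : Continuous (fun t : ℝ => u (a + t • (x - a))) := hu.continuous.comp hline
    have hderiv : ∀ t ∈ Set.uIcc (0:ℝ) 1,
        HasDerivAt (fun s : ℝ => φ (a + s • (x - a)))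
          ((u (a + t • (x - a))).1 * (x.1 - a.1) + (u (a + t • (x - a))).2 * (x.2 - a.2)) t := by
      intro t _
      have hl : HasDerivAt (fun s : ℝ => a + s • (x - a)) (x - a) t := by
        simpa using ((hasDerivAt_id t).smul_const (x - a)).const_add a
      have h := (hφ (a + t • (x - a))).comp_hasDerivAt t hl
      simpa [toCLM, mul_comm, Function.comp_def] using h
    have hcd : Continuous (fun t : ℝ =>
        (u (a + t • (x - a))).1 * (x.1 - a.1) + (u (a + t • (x - a))).2 * (x.2 - a.2)) :=
      (hcu.fst.mul continuous_const).add (hcu.snd.mul continuous_const)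
    have hFTC := intervalIntegral.integral_eq_sub_of_hasDerivAt hderiv
      (hcd.intervalIntegrable _ _)
    have hFTC' : (∫ t in (0:ℝ)..1,
        ((u (a + t • (x - a))).1 * (x.1 - a.1) + (u (a + t • (x - a))).2 * (x.2 - a.2)))
        = φ x - φ a := by
      rw [hFTC]; norm_num
    rw [← hFTC', intervalIntegral.integral_add
      (f := fun t => (u (a + t • (x - a))).1 * (x.1 - a.1))
      (g := fun t => (u (a + t • (x - a))).2 * (x.2 - a.2))
      ((hcu.fst.mul continuous_const).intervalIntegrable _ _)
      ((hcu.snd.mul continuous_const).intervalIntegrable _ _)]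
    simp only [intervalIntegral.integral_mul_const]
    ring
  -- A equals φ - c
  set c : ℝ := ∫ a : ℝ × ℝ, θ a * φ a with hc
  have hθint : Integrable θ := hθ.continuous.integrable_of_hasCompactSupport hθc
  have hθφint : Integrable (fun a : ℝ × ℝ => θ a * φ a) :=
    (hθ.continuous.mul hφc).integrable_of_hasCompactSupport (hθc.mul_right)
  have hAeq : A = fun x => φ x - c := by
    funext x
    rw [hA x]
    have : (fun a : ℝ × ℝ => θ a *
        ((x.1 - a.1) * (∫ t in (0 : ℝ)..1, (u (a + t • (x - a))).1) +
         (x.2 - a.2) * (∫ t in (0 : ℝ)..1, (u (a + t • (x - a))).2)))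
        = fun a : ℝ × ℝ => θ a * φ x - θ a * φ a := by
      funext a
      rw [hseg a x]
      ring
    rw [this, integral_sub (hθint.mul_const _) hθφint, integral_mul_const, hθ1, one_mul, ← hc]
  have hA' : ∀ x : ℝ × ℝ, HasFDerivAt A (toCLM (u x)) x := by
    intro x
    rw [hAeq]
    exact (hφ x).sub_const c
  refine ⟨fun x => (hA' x).differentiableAt, fun x => ?_⟩
  rw [(hA' x).fderiv]
  constructor <;> simp [toCLM]
end

section
/- Let θ : ℝ² → ℝ be a C^∞ function with compact support and ∫_{ℝ²} θ(a) da = 1. If ψ : ℝ² → ℝ is (the evaluation of) a bivariate polynomial of total degree ≤ p-1, then the components R₁ and R₂ of Rψ, defined by R₁(x) = -∫_{ℝ²} θ(a)(x₂-a₂) ∫₀¹ t ψ(a + t(x-a)) dt da and R₂(x) = ∫_{ℝ²} θ(a)(x₁-a₁) ∫₀¹ t ψ(a + t(x-a)) dt da, are (the evaluations of) bivariate polynomials of total degree ≤ p. -/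
open MeasureTheory

open MvPolynomial


noncomputable section PoincareAux

abbrev Apoly : Type := MvPolynomial (Fin 2) ℝ
abbrev Bpoly : Type := MvPolynomial (Fin 2) Apoly

def evalA (a : ℝ × ℝ) : Apoly →+* ℝ := (eval ![a.1, a.2])

def evalB (x a : ℝ × ℝ) : Bpoly →+* ℝ := eval₂Hom (evalA a) ![x.1, x.2]

lemma tIntegral (m0 m1 : ℕ) (a1 a2 u1 u2 : ℝ) :
    ∫ t in (0:ℝ)..1, t * ((a1 + t*u1)^m0 * (a2 + t*u2)^m1) =
    ∑ k ∈ Finset.range (m0+1), ∑ l ∈ Finset.range (m1+1),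
      ((m0.choose k : ℝ) * (m1.choose l) / (k+l+2)) *
        (u1^k * u2^l * a1^(m0-k) * a2^(m1-l)) := by
  have h1 : ∀ t : ℝ, t * ((a1 + t*u1)^m0 * (a2 + t*u2)^m1) =
      ∑ k ∈ Finset.range (m0+1), ∑ l ∈ Finset.range (m1+1),
        ((m0.choose k : ℝ) * (m1.choose l)) *
          (u1^k * u2^l * a1^(m0-k) * a2^(m1-l)) * t^(k+l+1) := by
    intro t
    rw [show a1 + t*u1 = t*u1 + a1 by ring, show a2 + t*u2 = t*u2 + a2 by ring,
      add_pow, add_pow, Finset.sum_mul_sum, Finset.mul_sum]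
    refine Finset.sum_congr rfl fun k _ => ?_
    rw [Finset.mul_sum]
    refine Finset.sum_congr rfl fun l _ => ?_
    ring
  simp_rw [h1]
  rw [intervalIntegral.integral_finset_sum]
  · refine Finset.sum_congr rfl fun k _ => ?_
    rw [intervalIntegral.integral_finset_sum]
    · refine Finset.sum_congr rfl fun l _ => ?_
      rw [intervalIntegral.integral_const_mul, integral_pow]
      have : ((k + l + 1 : ℕ) : ℝ) + 1 = (k : ℝ) + l + 2 := by push_cast; ring
      rw [this]
      ring
    · intro l _
      exact (Continuous.intervalIntegrable (by continuity)) _ _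
  · intro k _
    refine Continuous.intervalIntegrable ?_ _ _
    exact continuous_finset_sum _ fun l _ => by continuity

/-- generic polynomial in `B` representing `(x_{i'} - a_{i'}) * ∫₀¹ t ψ(a+t(x-a)) dt`. -/
def HH (P : Apoly) (i' : Fin 2) : Bpoly :=
  (X i' - C (X i')) *
  ∑ m ∈ P.support, ∑ k ∈ Finset.range (m 0 + 1), ∑ l ∈ Finset.range (m 1 + 1),
    C (C (P.coeff m * (m 0).choose k * ((m 1).choose l) / (k+l+2)) *
        X 0 ^ (m 0 - k) * X 1 ^ (m 1 - l)) *
      (X 0 - C (X 0))^k * (X 1 - C (X 1))^l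

lemma evalB_HH (P : Apoly) (i' : Fin 2) (x a : ℝ × ℝ) :
    evalB x a (HH P i') =
      (![x.1,x.2] i' - ![a.1,a.2] i') *
        ∫ t in (0:ℝ)..1, t * eval ![a.1 + t*(x.1-a.1), a.2 + t*(x.2-a.2)] P := by
  have hin : ∀ t : ℝ, eval ![a.1 + t*(x.1-a.1), a.2 + t*(x.2-a.2)] P =
      ∑ m ∈ P.support, P.coeff m *
        ((a.1 + t*(x.1-a.1))^(m 0) * (a.2 + t*(x.2-a.2))^(m 1)) := by
    intro t
    rw [eval_eq']
    refine Finset.sum_congr rfl fun m _ => ?_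
    rw [Fin.prod_univ_two]
    simp
  have hint : (∫ t in (0:ℝ)..1, t * eval ![a.1 + t*(x.1-a.1), a.2 + t*(x.2-a.2)] P)
      = ∑ m ∈ P.support, P.coeff m *
          ∑ k ∈ Finset.range (m 0+1), ∑ l ∈ Finset.range (m 1+1),
            (((m 0).choose k : ℝ) * ((m 1).choose l) / (k+l+2)) *
              ((x.1-a.1)^k * (x.2-a.2)^l * a.1^(m 0-k) * a.2^(m 1-l)) := by
    simp_rw [hin, Finset.mul_sum]
    rw [intervalIntegral.integral_finset_sum]
    · refine Finset.sum_congr rfl fun m _ => ?_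
      have h2 : ∀ t : ℝ,
          t * (P.coeff m * ((a.1 + t*(x.1-a.1))^(m 0) * (a.2 + t*(x.2-a.2))^(m 1)))
          = P.coeff m * (t * ((a.1 + t*(x.1-a.1))^(m 0) * (a.2 + t*(x.2-a.2))^(m 1))) := by
        intro t; ring
      simp_rw [h2]
      rw [intervalIntegral.integral_const_mul, tIntegral, Finset.mul_sum]
      refine Finset.sum_congr rfl fun k _ => ?_
      rw [Finset.mul_sum]
    · intro m _
      exact (Continuous.intervalIntegrable (by continuity)) _ _
  rw [hint]
  unfold HH
  rw [map_mul]
  congr 1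
  · simp [evalB, evalA]
  · rw [map_sum]
    refine Finset.sum_congr rfl fun m _ => ?_
    rw [map_sum, Finset.mul_sum]
    refine Finset.sum_congr rfl fun k _ => ?_
    rw [map_sum, Finset.mul_sum]
    refine Finset.sum_congr rfl fun l _ => ?_
    simp only [map_mul, map_pow, map_sub]
    have hbc : ∀ s : Apoly, evalB x a (C s) = eval ![a.1,a.2] s := fun s => by
      simp [evalB, evalA]
    have hb : ∀ i : Fin 2, evalB x a (X i) = ![x.1,x.2] i := fun i => by
      simp [evalB]
    rw [hbc, hb 0, hb 1, hbc, hbc]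
    simp only [map_mul, map_pow, eval_C, eval_X, Matrix.cons_val_zero, Matrix.cons_val_one,
      Matrix.head_cons]
    ring

lemma continuous_evalA (c : Apoly) : Continuous fun a : ℝ × ℝ => evalA a c := by
  induction c using MvPolynomial.induction_on with
  | C r => simpa [evalA] using continuous_const
  | add p q hp hq => simp only [map_add]; exact hp.add hq
  | mul_X p i hp =>
    simp only [map_mul, evalA, eval_X]
    refine Continuous.mul hp ?_
    fin_cases i
    · simpa using continuous_fst
    · simpa using continuous_snd

lemma finsupp_two_sum (n : Fin 2 →₀ ℕ) : (n.sum fun _ e => e) = n 0 + n 1 := by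
  rw [Finsupp.sum_fintype _ _ (fun _ => rfl), Fin.sum_univ_two]

lemma outer (θ : ℝ × ℝ → ℝ) (hθ : Continuous θ) (hθc : HasCompactSupport θ)
    (H : Bpoly) (p : ℕ) (hH : H.totalDegree ≤ p) :
    ∃ Q : MvPolynomial (Fin 2) ℝ, Q.totalDegree ≤ p ∧
      ∀ x : ℝ × ℝ, (∫ a : ℝ × ℝ, θ a * evalB x a H) = eval ![x.1, x.2] Q := by
  refine ⟨∑ n ∈ H.support, C (∫ a : ℝ × ℝ, θ a * evalA a (H.coeff n)) * X 0 ^ n 0 * X 1 ^ n 1,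
    ?_, ?_⟩
  · refine (totalDegree_finset_sum _ _).trans (Finset.sup_le fun n hn => ?_)
    have h1 : (C (∫ a : ℝ × ℝ, θ a * evalA a (H.coeff n)) * X 0 ^ n 0 * X 1 ^ n 1
        : MvPolynomial (Fin 2) ℝ).totalDegree ≤ 0 + n 0 + n 1 := by
      refine (totalDegree_mul _ _).trans (add_le_add ((totalDegree_mul _ _).trans
        (add_le_add ?_ ?_)) ?_)
      · exact le_of_eq (totalDegree_C _)
      · exact (totalDegree_pow _ _).trans (by simp [totalDegree_X])
      · exact (totalDegree_pow _ _).trans (by simp [totalDegree_X])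
    refine h1.trans ?_
    have := MvPolynomial.le_totalDegree hn
    rw [finsupp_two_sum] at this
    omega
  · intro x
    have hexp : ∀ a : ℝ × ℝ, θ a * evalB x a H =
        ∑ n ∈ H.support, (θ a * evalA a (H.coeff n)) * (x.1 ^ n 0 * x.2 ^ n 1) := by
      intro a
      rw [evalB, coe_eval₂Hom, eval₂_eq', Finset.mul_sum]
      refine Finset.sum_congr rfl fun n _ => ?_
      rw [Fin.prod_univ_two]
      simp only [Matrix.cons_val_zero, Matrix.cons_val_one, Matrix.head_cons]
      ring
    simp_rw [hexp]
    rw [integral_finset_sum]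
    · rw [map_sum]
      refine Finset.sum_congr rfl fun n _ => ?_
      rw [integral_mul_const]
      simp only [map_mul, map_pow, eval_C, eval_X, Matrix.cons_val_zero, Matrix.cons_val_one,
        Matrix.head_cons]
      ring
    · intro n _
      apply Integrable.mul_const
      apply Continuous.integrable_of_hasCompactSupport (hθ.mul (continuous_evalA _))
      exact hθc.mul_right

end PoincareAux


/-- The regularized Poincaré operator `R` preserves polynomials: if `θ : ℝ² → ℝ` is smooth,
compactly supported with `∫ θ = 1` and `ψ` is (the evaluation of) a bivariate polynomial of
total degree `≤ p - 1` (with `p ≥ 1`), then the components `R₁, R₂` of `Rψ` are (evaluations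
of) bivariate polynomials of total degree `≤ p`. -/
theorem regularized_poincare_R_preserves_polynomials
    (θ ψ : ℝ × ℝ → ℝ) (hθ : ContDiff ℝ (⊤ : ℕ∞) θ) (hθc : HasCompactSupport θ)
    (hθ1 : ∫ a : ℝ × ℝ, θ a = 1) (p : ℕ) (hp : 1 ≤ p)
    (hψ : ∃ P : MvPolynomial (Fin 2) ℝ, P.totalDegree ≤ p - 1 ∧
      ∀ x : ℝ × ℝ, ψ x = MvPolynomial.eval ![x.1, x.2] P)
    (R₁ R₂ : ℝ × ℝ → ℝ)
    (hR₁ : ∀ x : ℝ × ℝ,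
      R₁ x = -∫ a : ℝ × ℝ, θ a * (x.2 - a.2) * ∫ t in (0 : ℝ)..1, t * ψ (a + t • (x - a)))
    (hR₂ : ∀ x : ℝ × ℝ,
      R₂ x = ∫ a : ℝ × ℝ, θ a * (x.1 - a.1) * ∫ t in (0 : ℝ)..1, t * ψ (a + t • (x - a))) :
    (∃ Q₁ : MvPolynomial (Fin 2) ℝ, Q₁.totalDegree ≤ p ∧
      ∀ x : ℝ × ℝ, R₁ x = MvPolynomial.eval ![x.1, x.2] Q₁) ∧
    (∃ Q₂ : MvPolynomial (Fin 2) ℝ, Q₂.totalDegree ≤ p ∧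
      ∀ x : ℝ × ℝ, R₂ x = MvPolynomial.eval ![x.1, x.2] Q₂) := by
  obtain ⟨P, hPdeg, hPev⟩ := hψ
  -- degree bound for HH
  have hHHdeg : ∀ i' : Fin 2, (HH P i').totalDegree ≤ p := by
    intro i'
    unfold HH
    refine (totalDegree_mul _ _).trans ?_
    have h1 : (X i' - C (X i') : Bpoly).totalDegree ≤ 1 := by
      refine (totalDegree_sub _ _).trans (max_le ?_ ?_)
      · exact le_of_eq (totalDegree_X _)
      · simp [totalDegree_C]
    have h2 : (∑ m ∈ P.support, ∑ k ∈ Finset.range (m 0 + 1), ∑ l ∈ Finset.range (m 1 + 1),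
        C (C (P.coeff m * (m 0).choose k * ((m 1).choose l) / (k+l+2)) *
            X 0 ^ (m 0 - k) * X 1 ^ (m 1 - l)) *
          (X 0 - C (X 0))^k * (X 1 - C (X 1))^l : Bpoly).totalDegree ≤ p - 1 := by
      refine (totalDegree_finset_sum _ _).trans (Finset.sup_le fun m hm => ?_)
      refine (totalDegree_finset_sum _ _).trans (Finset.sup_le fun k hk => ?_)
      refine (totalDegree_finset_sum _ _).trans (Finset.sup_le fun l hl => ?_)
      have hsub : ∀ j : Fin 2, (X j - C (X j) : Bpoly).totalDegree ≤ 1 := by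
        intro j
        refine (totalDegree_sub _ _).trans (max_le ?_ ?_)
        · exact le_of_eq (totalDegree_X _)
        · simp [totalDegree_C]
      have hterm : (C (C (P.coeff m * (m 0).choose k * ((m 1).choose l) / (k+l+2)) *
            X 0 ^ (m 0 - k) * X 1 ^ (m 1 - l)) *
          (X 0 - C (X 0))^k * (X 1 - C (X 1))^l : Bpoly).totalDegree ≤ 0 + k + l := by
        refine (totalDegree_mul _ _).trans (add_le_add ((totalDegree_mul _ _).trans
          (add_le_add ?_ ?_)) ?_)
        · exact le_of_eq (totalDegree_C _)
        · exact (totalDegree_pow _ _).trans (by nlinarith [hsub 0])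
        · exact (totalDegree_pow _ _).trans (by nlinarith [hsub 1])
      refine hterm.trans ?_
      have hmem := MvPolynomial.le_totalDegree hm
      rw [finsupp_two_sum] at hmem
      have hk' : k ≤ m 0 := by
        have := Finset.mem_range.mp hk; omega
      have hl' : l ≤ m 1 := by
        have := Finset.mem_range.mp hl; omega
      omega
    calc (X i' - C (X i') : Bpoly).totalDegree + _ ≤ 1 + (p - 1) := add_le_add h1 h2
      _ = p := by omega
  -- pointwise: integrand rewrites to θ a * evalB x a (HH P i')
  have hpoint : ∀ (i' : Fin 2) (x a : ℝ × ℝ),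
      θ a * (![x.1,x.2] i' - ![a.1,a.2] i') *
          (∫ t in (0 : ℝ)..1, t * ψ (a + t • (x - a)))
        = θ a * evalB x a (HH P i') := by
    intro i' x a
    rw [evalB_HH]
    have hpsi : ∀ t : ℝ, ψ (a + t • (x - a)) =
        eval ![a.1 + t*(x.1-a.1), a.2 + t*(x.2-a.2)] P := by
      intro t
      rw [hPev]
      have he : a + t • (x - a) = (a.1 + t*(x.1-a.1), a.2 + t*(x.2-a.2)) := by
        ext <;> simp
      rw [he]
    simp_rw [hpsi]
    ring
  obtain ⟨Q₁', hQ₁d, hQ₁e⟩ := outer θ hθ.continuous hθc (HH P 1) p (hHHdeg 1)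
  obtain ⟨Q₂', hQ₂d, hQ₂e⟩ := outer θ hθ.continuous hθc (HH P 0) p (hHHdeg 0)
  constructor
  · refine ⟨-Q₁', by simpa [totalDegree_neg] using hQ₁d, fun x => ?_⟩
    rw [hR₁ x, map_neg, ← hQ₁e x]
    congr 1
    have h : ∀ a : ℝ × ℝ, θ a * (x.2 - a.2) *
        (∫ t in (0 : ℝ)..1, t * ψ (a + t • (x - a))) = θ a * evalB x a (HH P 1) :=
      fun a => by simpa using hpoint 1 x a
    simp_rw [h]
  · refine ⟨Q₂', hQ₂d, fun x => ?_⟩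
    rw [hR₂ x, ← hQ₂e x]
    have h : ∀ a : ℝ × ℝ, θ a * (x.1 - a.1) *
        (∫ t in (0 : ℝ)..1, t * ψ (a + t • (x - a))) = θ a * evalB x a (HH P 0) :=
      fun a => by simpa using hpoint 0 x a
    simp_rw [h]
end

section
/- Let θ : ℝ² → ℝ be a C^∞ function with compact support and ∫_{ℝ²} θ(a) da = 1. If u = (u₁,u₂) : ℝ² → ℝ² is a vector field whose components are (evaluations of) bivariate polynomials of total degree ≤ p, then Au, defined by Au(x) = ∫_{ℝ²} θ(a) [ (x₁-a₁) ∫₀¹ u₁(a + t(x-a)) dt + (x₂-a₂) ∫₀¹ u₂(a + t(x-a)) dt ] da, is (the evaluation of) a bivariate polynomial of total degree ≤ p+1. -/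
open MeasureTheory MvPolynomial

set_option maxHeartbeats 1000000
set_option synthInstance.maxHeartbeats 400000

namespace RPAux

abbrev S2 := MvPolynomial (Fin 2) ℝ
abbrev B2 := MvPolynomial (Fin 2) S2

/-- `a`-variable as element of `B2`. -/
noncomputable def av (i : Fin 2) : B2 := MvPolynomial.C (MvPolynomial.X i)
/-- `x`-variable as element of `B2`. -/
noncomputable def xv (i : Fin 2) : B2 := MvPolynomial.X i

/-- the line `a + t (x - a)`, component `i`, as polynomial in `t`. -/
noncomputable def line (i : Fin 2) : Polynomial B2 :=
  Polynomial.C (av i) + Polynomial.C (xv i - av i) * Polynomial.X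

noncomputable def cf : ℝ →+* Polynomial B2 :=
  (Polynomial.C).comp ((MvPolynomial.C : S2 →+* B2).comp (MvPolynomial.C : ℝ →+* S2))

noncomputable def qP (P : MvPolynomial (Fin 2) ℝ) : Polynomial B2 :=
  MvPolynomial.eval₂ cf line P

noncomputable def JP (P : MvPolynomial (Fin 2) ℝ) : B2 :=
  ∑ k ∈ Finset.range ((qP P).natDegree + 1),
    MvPolynomial.C (MvPolynomial.C ((k + 1 : ℝ)⁻¹)) * (qP P).coeff k

noncomputable def GP (P₁ P₂ : MvPolynomial (Fin 2) ℝ) : B2 :=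
  (xv 0 - av 0) * JP P₁ + (xv 1 - av 1) * JP P₂

/-- evaluation of `B2` at given `x` and `a` values. -/
noncomputable def φ (x a : ℝ × ℝ) : B2 →+* ℝ :=
  MvPolynomial.eval₂Hom (MvPolynomial.eval ![a.1, a.2]) ![x.1, x.2]

end RPAux

namespace RPAux

lemma phi_C (x a : ℝ × ℝ) (s : S2) : φ x a (MvPolynomial.C s) = MvPolynomial.eval ![a.1, a.2] s := by
  simp [φ]

lemma phi_X (x a : ℝ × ℝ) (i : Fin 2) : φ x a (MvPolynomial.X i) = ![x.1, x.2] i := by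
  simp [φ]

lemma eval_line (x a : ℝ × ℝ) (t : ℝ) (P : MvPolynomial (Fin 2) ℝ) :
    MvPolynomial.eval ![a.1 + t * (x.1 - a.1), a.2 + t * (x.2 - a.2)] P
      = Polynomial.eval₂ (φ x a) t (qP P) := by
  have hk : Polynomial.eval₂ (φ x a) t (qP P)
      = MvPolynomial.eval₂ ((Polynomial.eval₂RingHom (φ x a) t).comp cf)
          (fun i => Polynomial.eval₂ (φ x a) t (line i)) P := by
    simpa [qP, Function.comp_def] using
      MvPolynomial.eval₂_comp_left (Polynomial.eval₂RingHom (φ x a) t) cf line P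
  rw [hk]
  have h1 : (Polynomial.eval₂RingHom (φ x a) t).comp cf = RingHom.id ℝ := by
    ext r
    simp [cf, φ]
  have h2 : (fun i => Polynomial.eval₂ (φ x a) t (line i))
      = fun i => ![a.1 + t * (x.1 - a.1), a.2 + t * (x.2 - a.2)] i := by
    funext i
    have h3 : Polynomial.eval₂ (φ x a) t (line i)
        = φ x a (av i) + φ x a (xv i - av i) * t := by simp [line]
    rw [h3, map_sub]
    fin_cases i <;> simp [av, xv, phi_C, phi_X] <;> ring
  rw [h1, h2]
  rfl

end RPAux

namespace RPAux

lemma integral_eval₂ (x a : ℝ × ℝ) (P : MvPolynomial (Fin 2) ℝ) :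
    (∫ t in (0:ℝ)..1, Polynomial.eval₂ (φ x a) t (qP P)) = φ x a (JP P) := by
  set n := (qP P).natDegree + 1 with hn
  have hmap : ∀ t : ℝ, Polynomial.eval₂ (φ x a) t (qP P)
      = ∑ k ∈ Finset.range n, φ x a ((qP P).coeff k) * t ^ k := by
    intro t
    rw [Polynomial.eval₂_eq_eval_map]
    rw [Polynomial.eval_eq_sum_range' (lt_of_le_of_lt (Polynomial.natDegree_map_le)
      (Nat.lt_succ_self _))]
    exact Finset.sum_congr rfl fun k _ => by rw [Polynomial.coeff_map]
  simp only [hmap]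
  rw [intervalIntegral.integral_finset_sum (f := fun k t => φ x a ((qP P).coeff k) * t ^ k) (fun k _ =>
    ((continuous_const.mul (continuous_pow k)).intervalIntegrable _ _))]
  have hterm : ∀ k ∈ Finset.range n,
      (∫ t in (0:ℝ)..1, φ x a ((qP P).coeff k) * t ^ k)
        = (k + 1 : ℝ)⁻¹ * φ x a ((qP P).coeff k) := by
    intro k _
    rw [intervalIntegral.integral_const_mul, integral_pow]
    have : ((1:ℝ) ^ (k+1) - 0 ^ (k+1)) / (k+1) = (k+1:ℝ)⁻¹ := by
      rw [one_pow, zero_pow (Nat.succ_ne_zero k), sub_zero, one_div]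
    rw [this, mul_comm]
  rw [Finset.sum_congr rfl hterm]
  rw [JP, map_sum]
  refine Finset.sum_congr rfl fun k _ => ?_
  rw [map_mul, phi_C, MvPolynomial.eval_C]

end RPAux

namespace RPAux

/-- all coefficients of the `t`-polynomial have `x`-total-degree ≤ m -/
def Pdeg (r : Polynomial B2) (m : ℕ) : Prop := ∀ k, ((r.coeff k).totalDegree ≤ m)

lemma pdeg_C {b : B2} {m : ℕ} (h : b.totalDegree ≤ m) : Pdeg (Polynomial.C b) m := by
  intro k
  rw [Polynomial.coeff_C]
  split
  · exact h
  · simp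

lemma pdeg_mul {r s : Polynomial B2} {m n : ℕ} (hr : Pdeg r m) (hs : Pdeg s n) :
    Pdeg (r * s) (m + n) := by
  intro k
  rw [Polynomial.coeff_mul]
  refine (MvPolynomial.totalDegree_finset_sum _ _).trans (Finset.sup_le fun ij _ => ?_)
  exact (MvPolynomial.totalDegree_mul _ _).trans (add_le_add (hr ij.1) (hs ij.2))

lemma pdeg_pow {r : Polynomial B2} {m : ℕ} (hr : Pdeg r m) (n : ℕ) : Pdeg (r ^ n) (n * m) := by
  induction n with
  | zero => simpa using (show Pdeg (1 : Polynomial B2) 0 from by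
      rw [← map_one (Polynomial.C : B2 →+* Polynomial B2)]; exact pdeg_C (by simp))
  | succ n ih =>
      rw [pow_succ]
      have := pdeg_mul ih hr
      rwa [show n * m + m = (n + 1) * m by ring] at this

lemma pdeg_line (i : Fin 2) : Pdeg (line i) 1 := by
  intro k
  rw [line]
  match k with
  | 0 => simp [av, xv]
  | 1 =>
      simp only [Polynomial.coeff_add, Polynomial.coeff_C, Polynomial.coeff_C_mul,
        Polynomial.coeff_X_one]
      simp only [if_neg (one_ne_zero), zero_add, mul_one]
      refine (MvPolynomial.totalDegree_sub _ _).trans (max_le ?_ ?_)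
      · exact (MvPolynomial.totalDegree_X _).le
      · simp [av]
  | (n+2) =>
      simp [Polynomial.coeff_C, Polynomial.coeff_X]

lemma pdeg_prod (m : Fin 2 →₀ ℕ) :
    Pdeg (∏ i ∈ m.support, line i ^ m i) (∑ i ∈ m.support, m i) := by
  classical
  induction m.support using Finset.cons_induction with
  | empty => simpa using (show Pdeg (1 : Polynomial B2) 0 from by
      rw [← map_one (Polynomial.C : B2 →+* Polynomial B2)]; exact pdeg_C (by simp))
  | cons i s hi ih =>
      rw [Finset.prod_cons, Finset.sum_cons]
      have h1 := pdeg_pow (pdeg_line i) (m i)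
      rw [mul_one] at h1
      exact pdeg_mul h1 ih

lemma pdeg_sum {ι : Type*} (s : Finset ι) (f : ι → Polynomial B2) {m : ℕ}
    (h : ∀ i ∈ s, Pdeg (f i) m) : Pdeg (∑ i ∈ s, f i) m := by
  intro k
  rw [Polynomial.finset_sum_coeff]
  exact (MvPolynomial.totalDegree_finset_sum _ _).trans
    (Finset.sup_le fun i hi => h i hi k)

lemma pdeg_qP (P : MvPolynomial (Fin 2) ℝ) : Pdeg (qP P) P.totalDegree := by
  rw [qP, MvPolynomial.eval₂_eq]
  refine pdeg_sum _ _ fun m hm => ?_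
  have h1 : Pdeg (cf (MvPolynomial.coeff m P)) 0 := by
    simp only [cf, RingHom.comp_apply]
    exact pdeg_C (by simp)
  have h2 := pdeg_prod m
  have h3 : (∑ i ∈ m.support, m i) ≤ P.totalDegree := by
    simpa [Finsupp.sum] using MvPolynomial.le_totalDegree hm
  have := pdeg_mul h1 h2
  rw [zero_add] at this
  exact fun k => (this k).trans h3

lemma totalDegree_JP (P : MvPolynomial (Fin 2) ℝ) : (JP P).totalDegree ≤ P.totalDegree := by
  rw [JP]
  refine (MvPolynomial.totalDegree_finset_sum _ _).trans (Finset.sup_le fun k _ => ?_)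
  refine (MvPolynomial.totalDegree_mul _ _).trans ?_
  simpa using pdeg_qP P k

lemma totalDegree_GP {P₁ P₂ : MvPolynomial (Fin 2) ℝ} {p : ℕ}
    (h1 : P₁.totalDegree ≤ p) (h2 : P₂.totalDegree ≤ p) :
    (GP P₁ P₂).totalDegree ≤ p + 1 := by
  rw [GP]
  have key : ∀ (i : Fin 2) (P : MvPolynomial (Fin 2) ℝ), P.totalDegree ≤ p →
      ((xv i - av i) * JP P).totalDegree ≤ p + 1 := by
    intro i P hP
    refine (MvPolynomial.totalDegree_mul _ _).trans ?_
    have hx : (xv i - av i).totalDegree ≤ 1 := by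
      refine (MvPolynomial.totalDegree_sub _ _).trans (max_le ?_ ?_)
      · exact (MvPolynomial.totalDegree_X _).le
      · simp [av]
    have := add_le_add hx ((totalDegree_JP P).trans hP)
    omega
  exact (MvPolynomial.totalDegree_add _ _).trans
    (max_le (key 0 P₁ h1) (key 1 P₂ h2))

end RPAux

open RPAux

/-- The regularized Poincaré operator `A` preserves polynomials. -/
theorem regularized_poincare_A_preserves_polynomials
    (θ : ℝ × ℝ → ℝ) (u : ℝ × ℝ → ℝ × ℝ)
    (hθ : ContDiff ℝ (⊤ : ℕ∞) θ) (hθc : HasCompactSupport θ)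
    (hθ1 : ∫ a : ℝ × ℝ, θ a = 1) (p : ℕ)
    (hu₁ : ∃ P₁ : MvPolynomial (Fin 2) ℝ, P₁.totalDegree ≤ p ∧
      ∀ x : ℝ × ℝ, (u x).1 = MvPolynomial.eval ![x.1, x.2] P₁)
    (hu₂ : ∃ P₂ : MvPolynomial (Fin 2) ℝ, P₂.totalDegree ≤ p ∧
      ∀ x : ℝ × ℝ, (u x).2 = MvPolynomial.eval ![x.1, x.2] P₂)
    (A : ℝ × ℝ → ℝ)
    (hA : ∀ x : ℝ × ℝ,
      A x = ∫ a : ℝ × ℝ, θ a *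
        ((x.1 - a.1) * (∫ t in (0 : ℝ)..1, (u (a + t • (x - a))).1) +
         (x.2 - a.2) * (∫ t in (0 : ℝ)..1, (u (a + t • (x - a))).2))) :
    ∃ Q : MvPolynomial (Fin 2) ℝ, Q.totalDegree ≤ p + 1 ∧
      ∀ x : ℝ × ℝ, A x = MvPolynomial.eval ![x.1, x.2] Q := by
  classical
  obtain ⟨P₁, hP₁d, hP₁⟩ := hu₁
  obtain ⟨P₂, hP₂d, hP₂⟩ := hu₂
  set G : B2 := GP P₁ P₂ with hG
  -- the bracket equals `φ x a G`
  have hbracket : ∀ x a : ℝ × ℝ,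
      (x.1 - a.1) * (∫ t in (0 : ℝ)..1, (u (a + t • (x - a))).1) +
      (x.2 - a.2) * (∫ t in (0 : ℝ)..1, (u (a + t • (x - a))).2) = φ x a G := by
    intro x a
    have hcomp : ∀ t : ℝ, a + t • (x - a) = (a.1 + t * (x.1 - a.1), a.2 + t * (x.2 - a.2)) := by
      intro t
      ext <;> simp [Prod.smul_def, smul_eq_mul]
    have h1 : (∫ t in (0 : ℝ)..1, (u (a + t • (x - a))).1) = φ x a (JP P₁) := by
      rw [← integral_eval₂ x a P₁]
      refine intervalIntegral.integral_congr fun t _ => ?_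
      rw [hP₁, hcomp, ← eval_line]
    have h2 : (∫ t in (0 : ℝ)..1, (u (a + t • (x - a))).2) = φ x a (JP P₂) := by
      rw [← integral_eval₂ x a P₂]
      refine intervalIntegral.integral_congr fun t _ => ?_
      rw [hP₂, hcomp, ← eval_line]
    rw [h1, h2, hG, GP, map_add, map_mul, map_mul, map_sub, map_sub]
    simp [xv, av, phi_X, phi_C]
  -- continuity of coefficient functions
  have hcont : ∀ c : S2, Continuous fun a : ℝ × ℝ => MvPolynomial.eval ![a.1, a.2] c := by
    intro c
    have hv : Continuous fun a : ℝ × ℝ => (![a.1, a.2] : Fin 2 → ℝ) := by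
      refine continuous_pi fun i => ?_
      fin_cases i
      · simpa using continuous_fst
      · simpa using continuous_snd
    exact (MvPolynomial.continuous_eval (p := c)).comp hv
  have hint : ∀ c : S2,
      Integrable (fun a : ℝ × ℝ => θ a * MvPolynomial.eval ![a.1, a.2] c) := by
    intro c
    exact (hθ.continuous.mul (hcont c)).integrable_of_hasCompactSupport hθc.mul_right
  -- the polynomial Q
  refine ⟨∑ β ∈ G.support, MvPolynomial.monomial β
    (∫ a : ℝ × ℝ, θ a * MvPolynomial.eval ![a.1, a.2] (MvPolynomial.coeff β G)), ?_, ?_⟩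
  · refine (MvPolynomial.totalDegree_finset_sum _ _).trans (Finset.sup_le fun β hβ => ?_)
    refine (MvPolynomial.totalDegree_monomial_le _ _).trans ?_
    exact (MvPolynomial.le_totalDegree hβ).trans (totalDegree_GP hP₁d hP₂d)
  · intro x
    rw [hA]
    have hφ : ∀ a : ℝ × ℝ, φ x a G = ∑ β ∈ G.support,
        MvPolynomial.eval ![a.1, a.2] (MvPolynomial.coeff β G) *
          ∏ i ∈ β.support, ![x.1, x.2] i ^ β i := by
      intro a
      rw [φ, MvPolynomial.coe_eval₂Hom, MvPolynomial.eval₂_eq]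
    calc (∫ a : ℝ × ℝ, θ a *
        ((x.1 - a.1) * (∫ t in (0 : ℝ)..1, (u (a + t • (x - a))).1) +
         (x.2 - a.2) * (∫ t in (0 : ℝ)..1, (u (a + t • (x - a))).2)))
        = ∫ a : ℝ × ℝ, ∑ β ∈ G.support,
            (θ a * MvPolynomial.eval ![a.1, a.2] (MvPolynomial.coeff β G)) *
              ∏ i ∈ β.support, ![x.1, x.2] i ^ β i := by
          refine integral_congr_ae (Filter.Eventually.of_forall fun a => ?_)
          dsimp only
          rw [hbracket, hφ, Finset.mul_sum]
          exact Finset.sum_congr rfl fun β _ => by ring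
      _ = ∑ β ∈ G.support, ∫ a : ℝ × ℝ,
            (θ a * MvPolynomial.eval ![a.1, a.2] (MvPolynomial.coeff β G)) *
              ∏ i ∈ β.support, ![x.1, x.2] i ^ β i := by
          exact integral_finset_sum _ fun β _ =>
            (hint (MvPolynomial.coeff β G)).mul_const _
      _ = ∑ β ∈ G.support,
            (∫ a : ℝ × ℝ, θ a * MvPolynomial.eval ![a.1, a.2] (MvPolynomial.coeff β G)) *
              ∏ i ∈ β.support, ![x.1, x.2] i ^ β i := by
          exact Finset.sum_congr rfl fun β _ => by rw [integral_mul_const]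
      _ = MvPolynomial.eval ![x.1, x.2] (∑ β ∈ G.support, MvPolynomial.monomial β
            (∫ a : ℝ × ℝ, θ a * MvPolynomial.eval ![a.1, a.2] (MvPolynomial.coeff β G))) := by
          rw [map_sum]
          exact Finset.sum_congr rfl fun β _ => by
            rw [MvPolynomial.eval_monomial]
            rfl
end

section
/- Let θ : ℝ² → ℝ be a C^∞ function with compact support and ∫_{ℝ²} θ(a) da = 1, and let u = (u₁,u₂) : ℝ² → ℝ² be a C^∞ vector field. Set v := R(curl u), where curl u = ∂u₂/∂x₁ - ∂u₁/∂x₂ and R is the regularized Poincaré operator, and set ψ := A(u - v), where A is the regularized Poincaré operator on vector fields. Then: (i) curl v = curl u on ℝ², so that u - v is curl-free; and (ii) u = ∇ψ + v on ℝ². -/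
open MeasureTheory Metric intervalIntegral
set_option maxHeartbeats 1000000

noncomputable section RegSplit

abbrev E2 := ℝ × ℝ

/-- decomposition of a linear functional on ℝ² -/
lemma clm_decomp (L : E2 →L[ℝ] ℝ) (w : E2) : L w = w.1 * L (1, 0) + w.2 * L (0, 1) := by
  have hw : w = w.1 • ((1:ℝ), (0:ℝ)) + w.2 • ((0:ℝ), (1:ℝ)) := by
    ext <;> simp
  calc L w = L (w.1 • ((1:ℝ), (0:ℝ)) + w.2 • ((0:ℝ), (1:ℝ))) := by rw [← hw]
    _ = w.1 * L (1, 0) + w.2 * L (0, 1) := by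
        rw [map_add, L.map_smul, L.map_smul]; simp [smul_eq_mul]

/-- derivative of the segment map `p ↦ p.1 + t • (p.2 - p.1)` -/
def dgamma (t : ℝ) : (E2 × E2) →L[ℝ] E2 :=
  ContinuousLinearMap.fst ℝ E2 E2 +
    t • (ContinuousLinearMap.snd ℝ E2 E2 - ContinuousLinearMap.fst ℝ E2 E2)

lemma dgamma_apply (t : ℝ) (q : E2 × E2) : dgamma t q = q.1 + t • (q.2 - q.1) := by
  simp [dgamma]

lemma hasFDerivAt_gamma (t : ℝ) (p : E2 × E2) :
    HasFDerivAt (fun q : E2 × E2 => q.1 + t • (q.2 - q.1)) (dgamma t) p := by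
  have h : HasFDerivAt (fun q : E2 × E2 => q.1 + t • (q.2 - q.1))
      ((ContinuousLinearMap.fst ℝ E2 E2) +
        t • ((ContinuousLinearMap.snd ℝ E2 E2) - (ContinuousLinearMap.fst ℝ E2 E2))) p :=
    (hasFDerivAt_fst).add (((hasFDerivAt_snd).sub hasFDerivAt_fst).const_smul t)
  exact h

lemma continuous_dgamma : Continuous (fun t : ℝ => dgamma t) := by
  unfold dgamma
  exact continuous_const.add (continuous_id.smul continuous_const)

section Seg

variable (ρ : ℝ → ℝ) (G : E2 → ℝ) (G' : E2 → E2 →L[ℝ] ℝ)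

/-- the segment integral `∫₀¹ ρ t * G (a + t(x-a)) dt` as a function of `p = (a,x)` -/
def segI (p : E2 × E2) : ℝ := ∫ t in (0:ℝ)..1, ρ t * G (p.1 + t • (p.2 - p.1))

/-- its derivative in `p` -/
def segI' (p : E2 × E2) : (E2 × E2) →L[ℝ] ℝ :=
  ∫ t in (0:ℝ)..1, ρ t • ((G' (p.1 + t • (p.2 - p.1))).comp (dgamma t))

variable {ρ G G'}
variable (hρ : Continuous ρ) (hG : Continuous G) (hG' : Continuous G')
  (hGd : ∀ y, HasFDerivAt G (G' y) y)

lemma continuous_seg : Continuous (fun q : (E2 × E2) × ℝ => q.1.1 + q.2 • (q.1.2 - q.1.1)) := by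
  fun_prop

include hρ hG in
lemma segI_cont : Continuous (segI ρ G) := by
  apply continuous_parametric_intervalIntegral_of_continuous' (μ := volume)
    (f := fun (p : E2 × E2) (t : ℝ) => ρ t * G (p.1 + t • (p.2 - p.1)))
  have : Continuous (Function.uncurry fun (p : E2 × E2) (t : ℝ) =>
      ρ t * G (p.1 + t • (p.2 - p.1))) := by
    apply Continuous.mul (hρ.comp continuous_snd)
    exact hG.comp continuous_seg
  exact this

include hρ hG' in
lemma segI'_integrand_cont : Continuous (Function.uncurry fun (p : E2 × E2) (t : ℝ) =>
    ρ t • ((G' (p.1 + t • (p.2 - p.1))).comp (dgamma t))) := by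
  apply Continuous.smul (hρ.comp continuous_snd)
  exact (hG'.comp continuous_seg).clm_comp (continuous_dgamma.comp continuous_snd)

include hρ hG' in
lemma segI'_cont : Continuous (segI' ρ G') := by
  exact continuous_parametric_intervalIntegral_of_continuous' (μ := volume)
    (segI'_integrand_cont hρ hG') 0 1

include hρ hG hG' hGd in
lemma segI_hasFDerivAt (p₀ : E2 × E2) : HasFDerivAt (segI ρ G) (segI' ρ G' p₀) p₀ := by
  simp only [segI, segI']
  set F : E2 × E2 → ℝ → ℝ := fun p t => ρ t * G (p.1 + t • (p.2 - p.1)) with hFdef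
  set f' : E2 × E2 → ℝ → (E2 × E2) →L[ℝ] ℝ :=
    fun p t => ρ t • ((G' (p.1 + t • (p.2 - p.1))).comp (dgamma t)) with hf'def
  have hf'c : Continuous (Function.uncurry f') := segI'_integrand_cont hρ hG'
  obtain ⟨C, hC⟩ :=
    ((isCompact_closedBall p₀ 1).prod
      (isCompact_Icc (a := (0:ℝ)) (b := 1))).exists_bound_of_continuousOn hf'c.continuousOn
  have h1 : ∀ᶠ p in nhds p₀, AEStronglyMeasurable (F p) (volume.restrict (Set.uIoc (0:ℝ) 1)) := by
    filter_upwards with p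
    exact ((hρ.mul (hG.comp (continuous_seg.comp (Continuous.prodMk_right p)))).aestronglyMeasurable).restrict
  have h2 : IntervalIntegrable (F p₀) volume 0 1 :=
    (hρ.mul (hG.comp (continuous_seg.comp (Continuous.prodMk_right p₀)))).intervalIntegrable 0 1
  have h3 : AEStronglyMeasurable (f' p₀) (volume.restrict (Set.uIoc (0:ℝ) 1)) :=
    ((hf'c.comp (Continuous.prodMk_right p₀)).aestronglyMeasurable).restrict
  have h4 : ∀ᵐ t ∂(volume : Measure ℝ), t ∈ Set.uIoc (0:ℝ) 1 →
      ∀ x ∈ ball p₀ 1, ‖f' x t‖ ≤ C := by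
    filter_upwards with t ht x hx
    have hmem : ((x, t) : (E2 × E2) × ℝ) ∈ closedBall p₀ 1 ×ˢ Set.Icc (0:ℝ) 1 := by
      constructor
      · exact ball_subset_closedBall hx
      · rw [Set.uIoc_of_le (by norm_num : (0:ℝ) ≤ 1)] at ht
        exact ⟨le_of_lt ht.1, ht.2⟩
    simpa [Function.uncurry] using hC _ hmem
  have h5 : IntervalIntegrable (fun _ : ℝ => C) volume 0 1 := intervalIntegrable_const
  have h6 : ∀ᵐ t ∂(volume : Measure ℝ), t ∈ Set.uIoc (0:ℝ) 1 →
      ∀ x ∈ ball p₀ 1, HasFDerivAt (fun p => F p t) (f' x t) x := by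
    filter_upwards with t ht x hx
    have : HasFDerivAt (fun p : E2 × E2 => G (p.1 + t • (p.2 - p.1)))
        ((G' (x.1 + t • (x.2 - x.1))).comp (dgamma t)) x :=
      (hGd _).comp x (hasFDerivAt_gamma t x)
    exact this.const_mul (ρ t)
  exact intervalIntegral.hasFDerivAt_integral_of_dominated_of_fderiv_le (ball_mem_nhds _ one_pos) h1 h2 h3 h4 h5 h6

include hρ hG' in
lemma segI'_apply (p : E2 × E2) (q : E2 × E2) :
    segI' ρ G' p q = ∫ t in (0:ℝ)..1, ρ t * (G' (p.1 + t • (p.2 - p.1)) (q.1 + t • (q.2 - q.1))) := by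
  have hint : IntervalIntegrable
      (fun t : ℝ => ρ t • ((G' (p.1 + t • (p.2 - p.1))).comp (dgamma t))) volume 0 1 :=
    ((segI'_integrand_cont hρ hG').comp (Continuous.prodMk_right p)).intervalIntegrable 0 1
  rw [segI', ContinuousLinearMap.intervalIntegral_apply hint]
  congr 1

end Seg

section Area

variable {θ : E2 → ℝ} {K : E2 → E2 → ℝ} {K' : E2 → E2 → E2 →L[ℝ] ℝ}
variable (hθ : Continuous θ) (hθc : HasCompactSupport θ)
  (hK : Continuous (Function.uncurry K)) (hK' : Continuous (Function.uncurry K'))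
  (hKd : ∀ a x, HasFDerivAt (fun y => K a y) (K' a x) x)

include hθ hθc hK hK' hKd in
lemma area_hasFDerivAt (x₀ : E2) :
    HasFDerivAt (fun x => ∫ a : E2, θ a * K a x) (∫ a : E2, θ a • K' a x₀) x₀ := by
  have hcont' : Continuous (fun p : E2 × E2 => θ p.1 • K' p.1 p.2) :=
    (hθ.comp continuous_fst).smul hK'
  obtain ⟨C, hC⟩ := (hθc.prod (isCompact_closedBall x₀ 1)).exists_bound_of_continuousOn
    hcont'.continuousOn
  set bound : E2 → ℝ := Set.indicator (tsupport θ) (fun _ => C) with hbdef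
  have h1 : ∀ᶠ x in nhds x₀, AEStronglyMeasurable (fun a => θ a * K a x) (volume : Measure E2) := by
    filter_upwards with x
    exact (hθ.mul (hK.comp (continuous_id.prodMk continuous_const))).aestronglyMeasurable
  have h2 : Integrable (fun a => θ a * K a x₀) (volume : Measure E2) := by
    apply Continuous.integrable_of_hasCompactSupport
      (hθ.mul (hK.comp (continuous_id.prodMk continuous_const)))
    exact hθc.mul_right
  have h3 : AEStronglyMeasurable (fun a => θ a • K' a x₀) (volume : Measure E2) :=
    (hcont'.comp (continuous_id.prodMk continuous_const)).aestronglyMeasurable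
  have h4 : ∀ᵐ a ∂(volume : Measure E2), ∀ x ∈ ball x₀ 1, ‖θ a • K' a x‖ ≤ bound a := by
    filter_upwards with a x hx
    by_cases ha : a ∈ tsupport θ
    · have : ((a, x) : E2 × E2) ∈ tsupport θ ×ˢ closedBall x₀ 1 :=
        ⟨ha, ball_subset_closedBall hx⟩
      have := hC _ this
      simpa [hbdef, Set.indicator_of_mem ha] using this
    · have hz : θ a = 0 := image_eq_zero_of_notMem_tsupport ha
      simp [hbdef, Set.indicator_of_notMem ha, hz]
  have h5 : Integrable bound (volume : Measure E2) := by
    rw [hbdef, integrable_indicator_iff (isClosed_tsupport θ).measurableSet]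
    exact (integrableOn_const_iff (by simp)).mpr (Or.inr hθc.measure_lt_top)
  have h6 : ∀ᵐ a ∂(volume : Measure E2), ∀ x ∈ ball x₀ 1,
      HasFDerivAt (fun y => θ a * K a y) (θ a • K' a x) x := by
    filter_upwards with a x _
    exact (hKd a x).const_mul (θ a)
  exact hasFDerivAt_integral_of_dominated_of_fderiv_le (ball_mem_nhds _ one_pos) h1 h2 h3 h4 h5 h6

include hθ hθc hK' in
lemma area_integral_apply (x : E2) (q : E2) :
    (∫ a : E2, θ a • K' a x) q = ∫ a : E2, θ a * K' a x q := by
  have hint : Integrable (fun a => θ a • K' a x) (volume : Measure E2) := by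
    apply Continuous.integrable_of_hasCompactSupport
      (((hθ.comp continuous_fst).smul hK').comp (continuous_id.prodMk continuous_const))
    exact hθc.smul_right
  rw [ContinuousLinearMap.integral_apply hint]
  congr 1

include hθ hθc hK' in
lemma area_deriv_cont : Continuous (fun x : E2 => ∫ a : E2, θ a • K' a x) := by
  have heq : ∀ x : E2, (∫ a : E2, θ a • K' a x) = ∫ a in tsupport θ, θ a • K' a x := by
    intro x
    refine (setIntegral_eq_integral_of_forall_compl_eq_zero fun a ha => ?_).symm
    simp [image_eq_zero_of_notMem_tsupport ha]
  simp_rw [heq]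
  exact continuous_parametric_integral_of_continuous
    (f := fun (x : E2) (a : E2) => θ a • K' a x)
    (by exact ((hθ.comp continuous_snd).smul (hK'.comp (continuous_snd.prodMk continuous_fst)))) hθc

end Area

section Top

variable (θ ρ : ℝ × ℝ → ℝ) (G₁ G₂ : E2 → ℝ) (G₁' G₂' : E2 → E2 →L[ℝ] ℝ)

def Kc (ρ : ℝ → ℝ) (G₁ G₂ : E2 → ℝ) (a x : E2) : ℝ :=
  (x.1 - a.1) * segI ρ G₁ (a, x) + (x.2 - a.2) * segI ρ G₂ (a, x)

def Kc' (ρ : ℝ → ℝ) (G₁ G₂ : E2 → ℝ) (G₁' G₂' : E2 → E2 →L[ℝ] ℝ) (a x : E2) : E2 →L[ℝ] ℝ :=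
  ((x.1 - a.1) • ((segI' ρ G₁' (a, x)).comp (ContinuousLinearMap.inr ℝ E2 E2)) +
      segI ρ G₁ (a, x) • ContinuousLinearMap.fst ℝ ℝ ℝ) +
    ((x.2 - a.2) • ((segI' ρ G₂' (a, x)).comp (ContinuousLinearMap.inr ℝ E2 E2)) +
      segI ρ G₂ (a, x) • ContinuousLinearMap.snd ℝ ℝ ℝ)

def Tf (θ : E2 → ℝ) (ρ : ℝ → ℝ) (G₁ G₂ : E2 → ℝ) (x : E2) : ℝ :=
  ∫ a : E2, θ a * Kc ρ G₁ G₂ a x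

def Tf' (θ : E2 → ℝ) (ρ : ℝ → ℝ) (G₁ G₂ : E2 → ℝ) (G₁' G₂' : E2 → E2 →L[ℝ] ℝ) (x : E2) :
    E2 →L[ℝ] ℝ :=
  ∫ a : E2, θ a • Kc' ρ G₁ G₂ G₁' G₂' a x

variable {θ : E2 → ℝ} {ρ : ℝ → ℝ} {G₁ G₂ : E2 → ℝ} {G₁' G₂' : E2 → E2 →L[ℝ] ℝ}
variable (hθ : Continuous θ) (hθc : HasCompactSupport θ) (hρ : Continuous ρ)
  (hG₁ : Continuous G₁) (hG₂ : Continuous G₂)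
  (hG₁' : Continuous G₁') (hG₂' : Continuous G₂')
  (hG₁d : ∀ y, HasFDerivAt G₁ (G₁' y) y) (hG₂d : ∀ y, HasFDerivAt G₂ (G₂' y) y)

include hρ hG₁ hG₂ in
lemma Kc_cont : Continuous (Function.uncurry (Kc ρ G₁ G₂)) := by
  have h1 := segI_cont hρ hG₁
  have h2 := segI_cont hρ hG₂
  apply Continuous.add
  · exact (continuous_snd.fst.sub continuous_fst.fst).mul h1
  · exact (continuous_snd.snd.sub continuous_fst.snd).mul h2

include hρ hG₁ hG₂ hG₁' hG₂' in
lemma Kc'_cont : Continuous (Function.uncurry (Kc' ρ G₁ G₂ G₁' G₂')) := by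
  have h1 := segI_cont hρ hG₁
  have h2 := segI_cont hρ hG₂
  have h1' := segI'_cont hρ hG₁'
  have h2' := segI'_cont hρ hG₂'
  apply Continuous.add <;> apply Continuous.add
  · exact (continuous_snd.fst.sub continuous_fst.fst).smul (h1'.clm_comp continuous_const)
  · exact h1.smul continuous_const
  · exact (continuous_snd.snd.sub continuous_fst.snd).smul (h2'.clm_comp continuous_const)
  · exact h2.smul continuous_const

include hρ hG₁ hG₂ hG₁' hG₂' hG₁d hG₂d in
lemma Kcd (a x : E2) :
    HasFDerivAt (fun y => Kc ρ G₁ G₂ a y) (Kc' ρ G₁ G₂ G₁' G₂' a x) x := by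
  have hseg₁ : HasFDerivAt (fun y : E2 => segI ρ G₁ (a, y))
      ((segI' ρ G₁' (a, x)).comp (ContinuousLinearMap.inr ℝ E2 E2)) x :=
    (segI_hasFDerivAt hρ hG₁ hG₁' hG₁d (a, x)).comp x (hasFDerivAt_prodMk_right a x)
  have hseg₂ : HasFDerivAt (fun y : E2 => segI ρ G₂ (a, y))
      ((segI' ρ G₂' (a, x)).comp (ContinuousLinearMap.inr ℝ E2 E2)) x :=
    (segI_hasFDerivAt hρ hG₂ hG₂' hG₂d (a, x)).comp x (hasFDerivAt_prodMk_right a x)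
  have hl1 : HasFDerivAt (fun y : E2 => y.1 - a.1) (ContinuousLinearMap.fst ℝ ℝ ℝ) x :=
    (hasFDerivAt_fst).sub_const a.1
  have hl2 : HasFDerivAt (fun y : E2 => y.2 - a.2) (ContinuousLinearMap.snd ℝ ℝ ℝ) x :=
    (hasFDerivAt_snd).sub_const a.2
  exact (hl1.mul hseg₁).add (hl2.mul hseg₂)

include hθ hθc hρ hG₁ hG₂ hG₁' hG₂' hG₁d hG₂d in
lemma Tf_hasFDerivAt (x₀ : E2) :
    HasFDerivAt (Tf θ ρ G₁ G₂) (Tf' θ ρ G₁ G₂ G₁' G₂' x₀) x₀ :=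
  area_hasFDerivAt hθ hθc (Kc_cont hρ hG₁ hG₂) (Kc'_cont hρ hG₁ hG₂ hG₁' hG₂')
    (Kcd hρ hG₁ hG₂ hG₁' hG₂' hG₁d hG₂d) x₀

include hθ hθc hρ hG₁ hG₂ hG₁' hG₂' in
lemma Tf'_cont : Continuous (Tf' θ ρ G₁ G₂ G₁' G₂') :=
  area_deriv_cont hθ hθc (Kc'_cont hρ hG₁ hG₂ hG₁' hG₂')

include hθ hθc hρ hG₁ hG₂ hG₁' hG₂' in
lemma Tf'_apply (x : E2) (q : E2) :
    Tf' θ ρ G₁ G₂ G₁' G₂' x q =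
      ∫ a : E2, θ a *
        (((x.1 - a.1) * (segI' ρ G₁' (a, x) (0, q)) + segI ρ G₁ (a, x) * q.1) +
          ((x.2 - a.2) * (segI' ρ G₂' (a, x) (0, q)) + segI ρ G₂ (a, x) * q.2)) := by
  rw [Tf', area_integral_apply hθ hθc (Kc'_cont hρ hG₁ hG₂ hG₁' hG₂')]
  congr 1

end Top

section FTC

variable {G : E2 → ℝ} {G' : E2 → E2 →L[ℝ] ℝ}
variable (hG : Continuous G) (hG' : Continuous G') (hGd : ∀ y, HasFDerivAt G (G' y) y)

lemma hasDerivAt_seg (a x : E2) (t : ℝ) :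
    HasDerivAt (fun s : ℝ => a + s • (x - a)) (x - a) t := by
  have := ((hasDerivAt_id t).smul_const (x - a)).const_add a
  simpa using this

lemma cont_seg_t (a x : E2) : Continuous (fun t : ℝ => a + t • (x - a)) := by fun_prop

include hG' in
lemma cont_clm_seg (a x : E2) (w : E2) :
    Continuous (fun t : ℝ => G' (a + t • (x - a)) w) :=
  ((ContinuousLinearMap.apply ℝ ℝ w).continuous).comp (hG'.comp (cont_seg_t a x))

include hG hG' hGd in
lemma ftc_v (a x : E2) :
    (x.1 - a.1) * (segI' (fun t => t) G' (a, x) (0, ((1:ℝ), (0:ℝ)))) +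
      (x.2 - a.2) * (segI' (fun t => t) G' (a, x) (0, ((0:ℝ), (1:ℝ)))) +
      2 * segI (fun t => t) G (a, x) = G x := by
  have hρ : Continuous (fun t : ℝ => t) := continuous_id
  have key : ∀ t : ℝ, HasDerivAt (fun s : ℝ => s ^ 2 * G (a + s • (x - a)))
      (2 * t * G (a + t • (x - a)) + t ^ 2 * (G' (a + t • (x - a)) (x - a))) t := by
    intro t
    have h1 : HasDerivAt (fun s : ℝ => s ^ 2) (2 * t) t := by
      simpa using hasDerivAt_pow 2 t
    have h2 : HasDerivAt (fun s : ℝ => G (a + s • (x - a)))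
        (G' (a + t • (x - a)) (x - a)) t :=
      (hGd _).comp_hasDerivAt t (hasDerivAt_seg a x t)
    exact h1.mul h2
  have hcont : Continuous (fun t : ℝ =>
      2 * t * G (a + t • (x - a)) + t ^ 2 * (G' (a + t • (x - a)) (x - a))) := by
    apply Continuous.add
    · exact (continuous_const.mul continuous_id).mul (hG.comp (cont_seg_t a x))
    · exact (continuous_pow 2).mul (cont_clm_seg hG' a x (x - a))
  have hint : (∫ t in (0:ℝ)..1,
        (2 * t * G (a + t • (x - a)) + t ^ 2 * (G' (a + t • (x - a)) (x - a)))) =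
      (1:ℝ) ^ 2 * G (a + (1:ℝ) • (x - a)) - (0:ℝ) ^ 2 * G (a + (0:ℝ) • (x - a)) :=
    intervalIntegral.integral_eq_sub_of_hasDerivAt (fun t _ => key t)
      (hcont.intervalIntegrable 0 1)
  have e1 : ∀ w : E2, segI' (fun t : ℝ => t) G' (a, x) (0, w) =
      ∫ t in (0:ℝ)..1, t * (t * G' (a + t • (x - a)) w) := by
    intro w
    rw [segI'_apply hρ hG']
    apply intervalIntegral.integral_congr
    intro t _
    simp [ContinuousLinearMap.map_smul, smul_eq_mul]
  have e0 : segI (fun t : ℝ => t) G (a, x) = ∫ t in (0:ℝ)..1, t * G (a + t • (x - a)) := rfl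
  rw [e1, e1, e0, ← intervalIntegral.integral_const_mul, ← intervalIntegral.integral_const_mul,
    ← intervalIntegral.integral_const_mul]
  have hI1 : IntervalIntegrable
      (fun t : ℝ => (x.1 - a.1) * (t * (t * G' (a + t • (x - a)) ((1:ℝ), (0:ℝ))))) volume 0 1 :=
    (continuous_const.mul (continuous_id.mul (continuous_id.mul
      (cont_clm_seg hG' a x _)))).intervalIntegrable 0 1
  have hI2 : IntervalIntegrable
      (fun t : ℝ => (x.2 - a.2) * (t * (t * G' (a + t • (x - a)) ((0:ℝ), (1:ℝ))))) volume 0 1 :=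
    (continuous_const.mul (continuous_id.mul (continuous_id.mul
      (cont_clm_seg hG' a x _)))).intervalIntegrable 0 1
  have hI3 : IntervalIntegrable
      (fun t : ℝ => 2 * (t * G (a + t • (x - a)))) volume 0 1 :=
    (continuous_const.mul (continuous_id.mul (hG.comp (cont_seg_t a x)))).intervalIntegrable 0 1
  rw [← intervalIntegral.integral_add hI1 hI2, ← intervalIntegral.integral_add (hI1.add hI2) hI3]
  have heq : Set.EqOn
      (fun t : ℝ => (x.1 - a.1) * (t * (t * G' (a + t • (x - a)) ((1:ℝ), (0:ℝ)))) +
        (x.2 - a.2) * (t * (t * G' (a + t • (x - a)) ((0:ℝ), (1:ℝ)))) +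
        2 * (t * G (a + t • (x - a))))
      (fun t : ℝ => 2 * t * G (a + t • (x - a)) + t ^ 2 * (G' (a + t • (x - a)) (x - a)))
      (Set.uIcc (0:ℝ) 1) := by
    intro t _
    have hd := clm_decomp (G' (a + t • (x - a))) (x - a)
    simp only [Prod.fst_sub, Prod.snd_sub] at hd
    simp only [hd]
    ring
  rw [intervalIntegral.integral_congr heq, hint]
  simp

end FTC

section FTCpsi

variable {g : E2 → ℝ} {g' F₁ F₂ : E2 → E2 →L[ℝ] ℝ}
variable (hg : Continuous g) (hg' : Continuous g') (hgd : ∀ y, HasFDerivAt g (g' y) y)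
  (hF₁ : Continuous F₁) (hF₂ : Continuous F₂)

include hg hg' hgd hF₁ hF₂ in
lemma ftc_psi (e : E2) (a x : E2)
    (hkey : ∀ t : ℝ, (x.1 - a.1) * (F₁ (a + t • (x - a)) e) +
      (x.2 - a.2) * (F₂ (a + t • (x - a)) e) = g' (a + t • (x - a)) (x - a)) :
    (x.1 - a.1) * (segI' (fun _ => (1:ℝ)) F₁ (a, x) (0, e)) +
      (x.2 - a.2) * (segI' (fun _ => (1:ℝ)) F₂ (a, x) (0, e)) +
      segI (fun _ => (1:ℝ)) g (a, x) = g x := by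
  have hρ : Continuous (fun _ : ℝ => (1:ℝ)) := continuous_const
  have key : ∀ t : ℝ, HasDerivAt (fun s : ℝ => s * g (a + s • (x - a)))
      (1 * g (a + t • (x - a)) + t * (g' (a + t • (x - a)) (x - a))) t := by
    intro t
    exact (hasDerivAt_id t).mul ((hgd _).comp_hasDerivAt t (hasDerivAt_seg a x t))
  have hcont : Continuous (fun t : ℝ =>
      1 * g (a + t • (x - a)) + t * (g' (a + t • (x - a)) (x - a))) := by
    apply Continuous.add
    · exact continuous_const.mul (hg.comp (cont_seg_t a x))
    · exact continuous_id.mul (cont_clm_seg hg' a x (x - a))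
  have hint : (∫ t in (0:ℝ)..1,
        (1 * g (a + t • (x - a)) + t * (g' (a + t • (x - a)) (x - a)))) =
      (1:ℝ) * g (a + (1:ℝ) • (x - a)) - (0:ℝ) * g (a + (0:ℝ) • (x - a)) :=
    intervalIntegral.integral_eq_sub_of_hasDerivAt (fun t _ => key t)
      (hcont.intervalIntegrable 0 1)
  have e1 : ∀ (F : E2 → E2 →L[ℝ] ℝ), Continuous F → segI' (fun _ : ℝ => (1:ℝ)) F (a, x) (0, e) =
      ∫ t in (0:ℝ)..1, t * F (a + t • (x - a)) e := by
    intro F hF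
    rw [segI'_apply hρ hF]
    apply intervalIntegral.integral_congr
    intro t _
    simp [ContinuousLinearMap.map_smul, smul_eq_mul]
  have e0 : segI (fun _ : ℝ => (1:ℝ)) g (a, x) =
      ∫ t in (0:ℝ)..1, 1 * g (a + t • (x - a)) := rfl
  rw [e1 F₁ hF₁, e1 F₂ hF₂, e0, ← intervalIntegral.integral_const_mul,
    ← intervalIntegral.integral_const_mul]
  have hI1 : IntervalIntegrable
      (fun t : ℝ => (x.1 - a.1) * (t * F₁ (a + t • (x - a)) e)) volume 0 1 :=
    (continuous_const.mul (continuous_id.mul (cont_clm_seg hF₁ a x e))).intervalIntegrable 0 1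
  have hI2 : IntervalIntegrable
      (fun t : ℝ => (x.2 - a.2) * (t * F₂ (a + t • (x - a)) e)) volume 0 1 :=
    (continuous_const.mul (continuous_id.mul (cont_clm_seg hF₂ a x e))).intervalIntegrable 0 1
  have hI3 : IntervalIntegrable
      (fun t : ℝ => 1 * g (a + t • (x - a))) volume 0 1 :=
    (continuous_const.mul (hg.comp (cont_seg_t a x))).intervalIntegrable 0 1
  rw [← intervalIntegral.integral_add hI1 hI2, ← intervalIntegral.integral_add (hI1.add hI2) hI3]
  have heq : Set.EqOn
      (fun t : ℝ => (x.1 - a.1) * (t * F₁ (a + t • (x - a)) e) +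
        (x.2 - a.2) * (t * F₂ (a + t • (x - a)) e) + 1 * g (a + t • (x - a)))
      (fun t : ℝ => 1 * g (a + t • (x - a)) + t * (g' (a + t • (x - a)) (x - a)))
      (Set.uIcc (0:ℝ) 1) := by
    intro t _
    have := hkey t
    simp only []
    rw [← this]
    ring
  rw [intervalIntegral.integral_congr heq, hint]
  simp

end FTCpsi

@[simp] lemma segI_zero (ρ : ℝ → ℝ) (p : E2 × E2) : segI ρ (fun _ : E2 => (0:ℝ)) p = 0 := by
  simp [segI]

@[simp] lemma segI'_zero (ρ : ℝ → ℝ) (p : E2 × E2) :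
    segI' ρ (fun _ : E2 => (0 : E2 →L[ℝ] ℝ)) p = 0 := by
  simp [segI']

end RegSplit

/-- Regular splitting of a smooth field via the regularized Poincaré operators: with
`v := R(curl u)` and `ψ := A(u - v)` one has (i) `curl v = curl u` (so `u - v` is
curl-free) and (ii) `u = ∇ψ + v` on `ℝ²`. -/
theorem regular_splitting_smooth
    (θ : ℝ × ℝ → ℝ) (u : ℝ × ℝ → ℝ × ℝ)
    (hθ : ContDiff ℝ (⊤ : ℕ∞) θ) (hθc : HasCompactSupport θ)
    (hθ1 : ∫ a : ℝ × ℝ, θ a = 1) (hu : ContDiff ℝ (⊤ : ℕ∞) u)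
    (c : ℝ × ℝ → ℝ)
    (hc : ∀ x : ℝ × ℝ,
      c x = fderiv ℝ (fun y => (u y).2) x (1, 0) - fderiv ℝ (fun y => (u y).1) x (0, 1))
    (v₁ v₂ : ℝ × ℝ → ℝ)
    (hv₁ : ∀ x : ℝ × ℝ,
      v₁ x = -∫ a : ℝ × ℝ, θ a * (x.2 - a.2) * ∫ t in (0 : ℝ)..1, t * c (a + t • (x - a)))
    (hv₂ : ∀ x : ℝ × ℝ,
      v₂ x = ∫ a : ℝ × ℝ, θ a * (x.1 - a.1) * ∫ t in (0 : ℝ)..1, t * c (a + t • (x - a)))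
    (ψ : ℝ × ℝ → ℝ)
    (hψ : ∀ x : ℝ × ℝ,
      ψ x = ∫ a : ℝ × ℝ, θ a *
        ((x.1 - a.1) * (∫ t in (0 : ℝ)..1, ((u (a + t • (x - a))).1 - v₁ (a + t • (x - a)))) +
         (x.2 - a.2) * (∫ t in (0 : ℝ)..1, ((u (a + t • (x - a))).2 - v₂ (a + t • (x - a)))))) :
    Differentiable ℝ v₁ ∧ Differentiable ℝ v₂ ∧ Differentiable ℝ ψ ∧
    (∀ x : ℝ × ℝ, fderiv ℝ v₂ x (1, 0) - fderiv ℝ v₁ x (0, 1) = c x) ∧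
    (∀ x : ℝ × ℝ,
      (u x).1 = fderiv ℝ ψ x (1, 0) + v₁ x ∧ (u x).2 = fderiv ℝ ψ x (0, 1) + v₂ x) := by
  have hθco : Continuous θ := hθ.continuous
  have hu1 : ContDiff ℝ (⊤ : ℕ∞) (fun y => (u y).1) := contDiff_fst.comp hu
  have hu2 : ContDiff ℝ (⊤ : ℕ∞) (fun y => (u y).2) := contDiff_snd.comp hu
  -- smoothness of c
  have hceq : c = fun x => fderiv ℝ (fun y => (u y).2) x (1, 0) -
      fderiv ℝ (fun y => (u y).1) x (0, 1) := funext hc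
  have hcsm : ContDiff ℝ (⊤ : ℕ∞) c := by
    rw [hceq]
    have h2 : ContDiff ℝ (⊤ : ℕ∞) fun x : E2 => fderiv ℝ (fun y => (u y).2) x (((1:ℝ), (0:ℝ)) : E2) :=
      (ContinuousLinearMap.apply ℝ ℝ (((1:ℝ), (0:ℝ)) : E2)).contDiff.comp
        (hu2.fderiv_right (by simp))
    have h1 : ContDiff ℝ (⊤ : ℕ∞) fun x : E2 => fderiv ℝ (fun y => (u y).1) x (((0:ℝ), (1:ℝ)) : E2) :=
      (ContinuousLinearMap.apply ℝ ℝ (((0:ℝ), (1:ℝ)) : E2)).contDiff.comp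
        (hu1.fderiv_right (by simp))
    exact h2.sub h1
  set c' : E2 → E2 →L[ℝ] ℝ := fderiv ℝ c with hc'def
  have Hcd : ∀ y, HasFDerivAt c (c' y) y := fun y =>
    (hcsm.differentiable (by simp) y).hasFDerivAt
  have hcc : Continuous c := hcsm.continuous
  have hc'c : Continuous c' := hcsm.continuous_fderiv (by simp)
  -- zero data
  have h0 : Continuous (fun _ : E2 => (0:ℝ)) := continuous_const
  have h0' : Continuous (fun _ : E2 => (0 : E2 →L[ℝ] ℝ)) := continuous_const
  have h0d : ∀ y : E2, HasFDerivAt (fun _ : E2 => (0:ℝ)) ((fun _ : E2 => (0 : E2 →L[ℝ] ℝ)) y) y :=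
    fun y => hasFDerivAt_const 0 y
  have hρid : Continuous (fun t : ℝ => t) := continuous_id
  -- v₂ as Tf
  have hv₂f : v₂ = Tf θ (fun t => t) c (fun _ => 0) := by
    funext x
    rw [hv₂ x, Tf]
    congr 1; funext a
    rw [Kc]
    simp [segI, mul_assoc]
  have hv₁f : v₁ = fun x => -(Tf θ (fun t => t) (fun _ => 0) c x) := by
    funext x
    rw [hv₁ x]
    congr 1
    rw [Tf]
    congr 1; funext a
    rw [Kc]
    simp [segI, mul_assoc]
  have Hv₂d : ∀ x, HasFDerivAt v₂ (Tf' θ (fun t => t) c (fun _ => 0) c' (fun _ => 0) x) x := by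
    rw [hv₂f]
    exact fun x => Tf_hasFDerivAt hθco hθc hρid hcc h0 hc'c h0' Hcd h0d x
  have Hv₁d : ∀ x, HasFDerivAt v₁ (-(Tf' θ (fun t => t) (fun _ => 0) c (fun _ => 0) c' x)) x := by
    rw [hv₁f]
    exact fun x => (Tf_hasFDerivAt hθco hθc hρid h0 hcc h0' hc'c h0d Hcd x).neg
  have goal1 : Differentiable ℝ v₁ := fun x => (Hv₁d x).differentiableAt
  have goal2 : Differentiable ℝ v₂ := fun x => (Hv₂d x).differentiableAt
  have hfd₂ : ∀ x, fderiv ℝ v₂ x = Tf' θ (fun t => t) c (fun _ => 0) c' (fun _ => 0) x :=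
    fun x => (Hv₂d x).fderiv
  have hfd₁ : ∀ x, fderiv ℝ v₁ x = -(Tf' θ (fun t => t) (fun _ => 0) c (fun _ => 0) c' x) :=
    fun x => (Hv₁d x).fderiv
  -- continuity of segment integrals in `a` (x fixed)
  have hsegc : ∀ x : E2, Continuous (fun a : E2 => segI (fun t : ℝ => t) c (a, x)) :=
    fun x => (segI_cont hρid hcc).comp (continuous_id.prodMk continuous_const)
  have hseg'c : ∀ (x : E2) (q : E2 × E2),
      Continuous (fun a : E2 => segI' (fun t : ℝ => t) c' (a, x) q) := fun x q =>
    (ContinuousLinearMap.apply ℝ ℝ q).continuous.comp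
      ((segI'_cont hρid hc'c).comp (continuous_id.prodMk continuous_const))
  -- the curl identity
  have goal4 : ∀ x : E2, fderiv ℝ v₂ x (1, 0) - fderiv ℝ v₁ x (0, 1) = c x := by
    intro x
    rw [hfd₂ x, hfd₁ x]
    simp only [ContinuousLinearMap.neg_apply, sub_neg_eq_add]
    have hA : Tf' θ (fun t => t) c (fun _ => 0) c' (fun _ => 0) x ((1:ℝ), (0:ℝ)) =
        ∫ a : E2, θ a * ((x.1 - a.1) * segI' (fun t => t) c' (a, x) (0, ((1:ℝ), (0:ℝ))) +
          segI (fun t => t) c (a, x)) := by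
      rw [Tf'_apply hθco hθc hρid hcc h0 hc'c h0' x ((1:ℝ), (0:ℝ))]
      congr 1; funext a
      simp
    have hB : Tf' θ (fun t => t) (fun _ => 0) c (fun _ => 0) c' x ((0:ℝ), (1:ℝ)) =
        ∫ a : E2, θ a * ((x.2 - a.2) * segI' (fun t => t) c' (a, x) (0, ((0:ℝ), (1:ℝ))) +
          segI (fun t => t) c (a, x)) := by
      rw [Tf'_apply hθco hθc hρid h0 hcc h0' hc'c x ((0:ℝ), (1:ℝ))]
      congr 1; funext a
      simp
    rw [hA, hB]
    have hf : Integrable (fun a : E2 => θ a *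
        ((x.1 - a.1) * segI' (fun t => t) c' (a, x) (0, ((1:ℝ), (0:ℝ))) +
          segI (fun t => t) c (a, x))) (volume : Measure E2) := by
      apply Continuous.integrable_of_hasCompactSupport
        (hθco.mul (((continuous_const.sub continuous_fst).mul (hseg'c x _)).add (hsegc x)))
      exact hθc.mul_right
    have hg : Integrable (fun a : E2 => θ a *
        ((x.2 - a.2) * segI' (fun t => t) c' (a, x) (0, ((0:ℝ), (1:ℝ))) +
          segI (fun t => t) c (a, x))) (volume : Measure E2) := by
      apply Continuous.integrable_of_hasCompactSupport
        (hθco.mul (((continuous_const.sub continuous_snd).mul (hseg'c x _)).add (hsegc x)))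
      exact hθc.mul_right
    rw [← integral_add hf hg]
    have hstep : (∫ a : E2, (θ a *
        ((x.1 - a.1) * segI' (fun t => t) c' (a, x) (0, ((1:ℝ), (0:ℝ))) +
          segI (fun t => t) c (a, x)) + θ a *
        ((x.2 - a.2) * segI' (fun t => t) c' (a, x) (0, ((0:ℝ), (1:ℝ))) +
          segI (fun t => t) c (a, x)))) = ∫ a : E2, θ a * c x := by
      congr 1; funext a
      have hftc := ftc_v hcc hc'c Hcd a x
      linear_combination θ a * hftc
    rw [hstep, MeasureTheory.integral_mul_const, hθ1, one_mul]
  -- w data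
  set w₁ : E2 → ℝ := fun y => (u y).1 - v₁ y with hw₁def
  set w₂ : E2 → ℝ := fun y => (u y).2 - v₂ y with hw₂def
  set W₁ : E2 → E2 →L[ℝ] ℝ := fun y => fderiv ℝ (fun z => (u z).1) y - fderiv ℝ v₁ y with hW₁def
  set W₂ : E2 → E2 →L[ℝ] ℝ := fun y => fderiv ℝ (fun z => (u z).2) y - fderiv ℝ v₂ y with hW₂def
  have HW₁d : ∀ y, HasFDerivAt w₁ (W₁ y) y := fun y =>
    ((hu1.differentiable (by simp) y).hasFDerivAt).sub ((goal1 y).hasFDerivAt)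
  have HW₂d : ∀ y, HasFDerivAt w₂ (W₂ y) y := fun y =>
    ((hu2.differentiable (by simp) y).hasFDerivAt).sub ((goal2 y).hasFDerivAt)
  have hW₁c : Continuous W₁ := by
    rw [hW₁def]
    simp only [hfd₁]
    exact (hu1.continuous_fderiv (by simp)).sub
      ((Tf'_cont hθco hθc hρid h0 hcc h0' hc'c).neg)
  have hW₂c : Continuous W₂ := by
    rw [hW₂def]
    simp only [hfd₂]
    exact (hu2.continuous_fderiv (by simp)).sub
      (Tf'_cont hθco hθc hρid hcc h0 hc'c h0')
  have hw₁c : Continuous w₁ := (hu1.continuous).sub goal1.continuous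
  have hw₂c : Continuous w₂ := (hu2.continuous).sub goal2.continuous
  have hsym : ∀ y : E2, W₂ y ((1:ℝ), (0:ℝ)) = W₁ y ((0:ℝ), (1:ℝ)) := by
    intro y
    have h4 := goal4 y
    have hcy := hc y
    simp only [hW₂def, hW₁def, ContinuousLinearMap.sub_apply]
    linarith
  -- ψ as Tf
  have hψf : ψ = Tf θ (fun _ => (1:ℝ)) w₁ w₂ := by
    funext x
    rw [hψ x, Tf]
    congr 1; funext a
    rw [Kc]
    simp [segI, hw₁def, hw₂def]
  have Hψd : ∀ x, HasFDerivAt ψ (Tf' θ (fun _ => (1:ℝ)) w₁ w₂ W₁ W₂ x) x := by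
    rw [hψf]
    exact fun x => Tf_hasFDerivAt hθco hθc continuous_const hw₁c hw₂c hW₁c hW₂c HW₁d HW₂d x
  have goal3 : Differentiable ℝ ψ := fun x => (Hψd x).differentiableAt
  refine ⟨goal1, goal2, goal3, goal4, ?_⟩
  intro x
  have hsegwc : ∀ (g : E2 → ℝ), Continuous g →
      Continuous (fun a : E2 => segI (fun _ : ℝ => (1:ℝ)) g (a, x)) := fun g hg =>
    (segI_cont continuous_const hg).comp (continuous_id.prodMk continuous_const)
  have hsegw'c : ∀ (F : E2 → E2 →L[ℝ] ℝ), Continuous F → ∀ q : E2 × E2,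
      Continuous (fun a : E2 => segI' (fun _ : ℝ => (1:ℝ)) F (a, x) q) := fun F hF q =>
    (ContinuousLinearMap.apply ℝ ℝ q).continuous.comp
      ((segI'_cont continuous_const hF).comp (continuous_id.prodMk continuous_const))
  have hkey₁ : ∀ (a : E2) (t : ℝ),
      (x.1 - a.1) * (W₁ (a + t • (x - a)) ((1:ℝ), (0:ℝ))) +
        (x.2 - a.2) * (W₂ (a + t • (x - a)) ((1:ℝ), (0:ℝ))) = W₁ (a + t • (x - a)) (x - a) := by
    intro a t
    rw [hsym (a + t • (x - a))]
    have hd := clm_decomp (W₁ (a + t • (x - a))) (x - a)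
    simp only [Prod.fst_sub, Prod.snd_sub] at hd
    rw [hd]
  have hkey₂ : ∀ (a : E2) (t : ℝ),
      (x.1 - a.1) * (W₁ (a + t • (x - a)) ((0:ℝ), (1:ℝ))) +
        (x.2 - a.2) * (W₂ (a + t • (x - a)) ((0:ℝ), (1:ℝ))) = W₂ (a + t • (x - a)) (x - a) := by
    intro a t
    rw [← hsym (a + t • (x - a))]
    have hd := clm_decomp (W₂ (a + t • (x - a))) (x - a)
    simp only [Prod.fst_sub, Prod.snd_sub] at hd
    rw [hd]
  have hv1 : fderiv ℝ ψ x ((1:ℝ), (0:ℝ)) = w₁ x := by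
    rw [(Hψd x).fderiv,
      Tf'_apply hθco hθc continuous_const hw₁c hw₂c hW₁c hW₂c x ((1:ℝ), (0:ℝ))]
    have hstep : (∫ a : E2, θ a *
        (((x.1 - a.1) * (segI' (fun _ => (1:ℝ)) W₁ (a, x) (0, ((1:ℝ), (0:ℝ)))) +
            segI (fun _ => (1:ℝ)) w₁ (a, x) * ((1:ℝ), (0:ℝ)).1) +
          ((x.2 - a.2) * (segI' (fun _ => (1:ℝ)) W₂ (a, x) (0, ((1:ℝ), (0:ℝ)))) +
            segI (fun _ => (1:ℝ)) w₂ (a, x) * ((1:ℝ), (0:ℝ)).2))) = ∫ a : E2, θ a * w₁ x := by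
      congr 1; funext a
      have hftc := ftc_psi hw₁c hW₁c HW₁d hW₁c hW₂c ((1:ℝ), (0:ℝ)) a x (hkey₁ a)
      simp only [mul_one, mul_zero, add_zero]
      linear_combination θ a * hftc
    rw [hstep, MeasureTheory.integral_mul_const, hθ1, one_mul]
  have hv2 : fderiv ℝ ψ x ((0:ℝ), (1:ℝ)) = w₂ x := by
    rw [(Hψd x).fderiv,
      Tf'_apply hθco hθc continuous_const hw₁c hw₂c hW₁c hW₂c x ((0:ℝ), (1:ℝ))]
    have hstep : (∫ a : E2, θ a *
        (((x.1 - a.1) * (segI' (fun _ => (1:ℝ)) W₁ (a, x) (0, ((0:ℝ), (1:ℝ)))) +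
            segI (fun _ => (1:ℝ)) w₁ (a, x) * ((0:ℝ), (1:ℝ)).1) +
          ((x.2 - a.2) * (segI' (fun _ => (1:ℝ)) W₂ (a, x) (0, ((0:ℝ), (1:ℝ)))) +
            segI (fun _ => (1:ℝ)) w₂ (a, x) * ((0:ℝ), (1:ℝ)).2))) = ∫ a : E2, θ a * w₂ x := by
      congr 1; funext a
      have hftc := ftc_psi hw₂c hW₂c HW₂d hW₁c hW₂c ((0:ℝ), (1:ℝ)) a x (hkey₂ a)
      simp only [mul_one, mul_zero, zero_add]
      linear_combination θ a * hftc
    rw [hstep, MeasureTheory.integral_mul_const, hθ1, one_mul]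
  constructor
  · rw [hv1, hw₁def]; ring
  · rw [hv2, hw₂def]; ring
end
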